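/- arXiv:2602.18810 — 6 statements merged into one kernel-verified Lean document; each statement's English description precedes it below -/
import Mathlib

section
/- For every smooth compactly supported function u on the half-line (0,∞), the product of the integrals ∫₀^∞ |u'(x)|² dx and ∫₀^∞ x²|u(x)|² dx is at least (9/4)·(∫₀^∞ |u(x)|² dx)². The constant 9/4 is strictly larger than the constant 1/4 valid on the whole real line. -/
open MeasureTheory Set

set_option maxHeartbeats 1000000 in
/-- Heisenberg Uncertainty Principle on the half-line `(0, ∞)` with sharp constant `9/4`,
which is strictly larger than the constant `1/4` valid on the whole real line. -/
theorem hup_halfline (u : ℝ → ℝ) (hu : ContDiff ℝ (⊤ : ℕ∞) u) (hsupp : HasCompactSupport u)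
    (hO : tsupport u ⊆ Ioi (0 : ℝ)) :
    (∫ x in Ioi (0 : ℝ), (deriv u x) ^ 2) * (∫ x in Ioi (0 : ℝ), x ^ 2 * (u x) ^ 2)
      ≥ (9 / 4 : ℝ) * (∫ x in Ioi (0 : ℝ), (u x) ^ 2) ^ 2 ∧ (9 / 4 : ℝ) > 1 / 4 := by
  refine ⟨?_, by norm_num⟩
  -- `u` vanishes on a neighbourhood of `(-∞, 0]`
  have h0 : (0 : ℝ) ∉ tsupport u := fun h => lt_irrefl (0:ℝ) (mem_Ioi.1 (hO h))
  obtain ⟨ε, hε, hball⟩ : ∃ ε > 0, Metric.ball (0 : ℝ) ε ⊆ (tsupport u)ᶜ :=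
    Metric.isOpen_iff.1 (isOpen_compl_iff.2 (isClosed_tsupport u)) 0 h0
  have huz : ∀ x : ℝ, x < ε → u x = 0 := by
    intro x hx
    rcases le_or_gt x 0 with h | h
    · exact image_eq_zero_of_notMem_tsupport fun hm => absurd (hO hm) (not_lt.2 h)
    · exact image_eq_zero_of_notMem_tsupport
        (hball (by simpa [Real.dist_eq, abs_of_pos h] using hx))
  have hud : Differentiable ℝ u := hu.differentiable (by simp)
  have hux : ∀ x : ℝ, HasDerivAt u (deriv u x) x := fun x => (hud x).hasDerivAt
  have hucont : Continuous u := hu.continuous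
  have hu'cont : Continuous (deriv u) := hu.continuous_deriv (by simp)
  -- the auxiliary function g = u/x, smooth and compactly supported
  set g : ℝ → ℝ := fun x => u x * x⁻¹ with hgdef
  have hgsupp : HasCompactSupport g :=
    hsupp.mono (fun x hx => by
      simp only [Function.mem_support, hgdef] at hx ⊢
      intro h; apply hx; rw [h, zero_mul])
  have hg : ContDiff ℝ (⊤ : ℕ∞) g := by
    rw [contDiff_iff_contDiffAt]
    intro x
    rcases eq_or_ne x 0 with rfl | hx
    · refine (contDiffAt_const (c := (0:ℝ))).congr_of_eventuallyEq ?_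
      filter_upwards [Metric.ball_mem_nhds (0 : ℝ) hε] with y hy
      have : y < ε := by
        have := (abs_lt.1 (by simpa [Real.dist_eq] using hy)).2
        simpa using this
      simp [hgdef, huz y this]
    · exact hu.contDiffAt.mul (contDiffAt_inv (𝕜 := ℝ) hx)
  have hgcont : Continuous g := hg.continuous
  have hgd : Differentiable ℝ g := hg.differentiable (by simp)
  -- the two functions whose derivative integrates to zero
  set F₁ : ℝ → ℝ := fun x => x * (u x * u x) with hF1def
  set F₂ : ℝ → ℝ := fun x => u x * g x with hF2def
  have hF1 : ContDiff ℝ 1 F₁ := (contDiff_id.mul (hu.mul hu)).of_le (by simp)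
  have hF2 : ContDiff ℝ 1 F₂ := (hu.mul hg).of_le (by simp)
  have hF1supp : HasCompactSupport F₁ :=
    hsupp.mono (fun x hx => by
      simp only [Function.mem_support, hF1def] at hx ⊢
      intro h; apply hx; rw [h]; ring)
  have hF2supp : HasCompactSupport F₂ :=
    hsupp.mono (fun x hx => by
      simp only [Function.mem_support, hF2def] at hx ⊢
      intro h; apply hx; rw [h, zero_mul])
  have hI1 : ∫ x in Ioi (0 : ℝ), deriv F₁ x = 0 := by
    rw [HasCompactSupport.integral_Ioi_deriv_eq hF1 hF1supp 0]
    simp [hF1def]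
  have hI2 : ∫ x in Ioi (0 : ℝ), deriv F₂ x = 0 := by
    rw [HasCompactSupport.integral_Ioi_deriv_eq hF2 hF2supp 0]
    simp [hF2def, huz 0 hε]
  -- derivative formulas on `(0, ∞)`
  have hd1 : ∀ x : ℝ, deriv F₁ x
      = 1 * (u x * u x) + x * (deriv u x * u x + u x * deriv u x) := by
    intro x
    exact (((hasDerivAt_id x).mul ((hux x).mul (hux x)))).deriv
  have hd2 : ∀ x ∈ Ioi (0 : ℝ), deriv F₂ x
      = deriv u x * g x + u x * (deriv u x * x⁻¹ + u x * (-(x ^ 2)⁻¹)) := by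
    intro x hx
    have hx0 : x ≠ 0 := ne_of_gt hx
    have hgder : HasDerivAt g (deriv u x * x⁻¹ + u x * (-(x ^ 2)⁻¹)) x :=
      (hux x).mul (hasDerivAt_inv hx0)
    exact ((hux x).mul hgder).deriv
  -- integrability of everything in sight
  have hIA : IntegrableOn (fun x => (deriv u x) ^ 2) (Ioi (0 : ℝ)) :=
    ((hu'cont.pow 2).integrable_of_hasCompactSupport
      (hsupp.deriv.comp_left (g := fun y : ℝ => y ^ 2) (by simp) :
          HasCompactSupport ((fun y : ℝ => y ^ 2) ∘ deriv u))).integrableOn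
  have hIB : IntegrableOn (fun x => x ^ 2 * (u x) ^ 2) (Ioi (0 : ℝ)) :=
    (((continuous_id.pow 2).mul (hucont.pow 2)).integrable_of_hasCompactSupport
      ((hsupp.comp_left (g := fun y : ℝ => y ^ 2) (by simp) :
          HasCompactSupport ((fun y : ℝ => y ^ 2) ∘ u)).mul_left)).integrableOn
  have hIC : IntegrableOn (fun x => (u x) ^ 2) (Ioi (0 : ℝ)) :=
    ((hucont.pow 2).integrable_of_hasCompactSupport
      (hsupp.comp_left (g := fun y : ℝ => y ^ 2) (by simp) :
          HasCompactSupport ((fun y : ℝ => y ^ 2) ∘ u))).integrableOn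
  have hIE : IntegrableOn (fun x => deriv F₂ x) (Ioi (0 : ℝ)) :=
    ((hF2.continuous_deriv le_rfl).integrable_of_hasCompactSupport
      hF2supp.deriv).integrableOn
  have hIF : IntegrableOn (fun x => deriv F₁ x) (Ioi (0 : ℝ)) :=
    ((hF1.continuous_deriv le_rfl).integrable_of_hasCompactSupport
      hF1supp.deriv).integrableOn
  set D : ℝ := ∫ x in Ioi (0 : ℝ), (deriv u x) ^ 2 with hD
  set X : ℝ := ∫ x in Ioi (0 : ℝ), x ^ 2 * (u x) ^ 2 with hX
  set S : ℝ := ∫ x in Ioi (0 : ℝ), (u x) ^ 2 with hS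
  -- the quadratic inequality in λ
  have quad : ∀ l : ℝ, 0 ≤ X * (l * l) + (-(3 * S)) * l + D := by
    intro l
    have key : ∀ x ∈ Ioi (0 : ℝ),
        (deriv u x - g x + l * (x * u x)) ^ 2
          = (deriv u x) ^ 2 + l ^ 2 * (x ^ 2 * (u x) ^ 2) + (-(3 * l)) * (u x) ^ 2
              + (-(deriv F₂ x)) + l * deriv F₁ x := by
      intro x hx
      have hx0 : x ≠ 0 := ne_of_gt hx
      rw [hd1 x, hd2 x hx, hgdef]
      field_simp
      ring
    have hnn : (0 : ℝ) ≤ ∫ x in Ioi (0 : ℝ), (deriv u x - g x + l * (x * u x)) ^ 2 :=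
      setIntegral_nonneg measurableSet_Ioi (fun x _ => sq_nonneg _)
    rw [setIntegral_congr_fun measurableSet_Ioi key] at hnn
    have h2 : IntegrableOn (fun x => (deriv u x) ^ 2 + l ^ 2 * (x ^ 2 * (u x) ^ 2))
        (Ioi (0 : ℝ)) := hIA.add (hIB.const_mul _)
    have h3 : IntegrableOn
        (fun x => (deriv u x) ^ 2 + l ^ 2 * (x ^ 2 * (u x) ^ 2) + (-(3 * l)) * (u x) ^ 2)
        (Ioi (0 : ℝ)) := h2.add (hIC.const_mul _)
    have h4 : IntegrableOn
        (fun x => (deriv u x) ^ 2 + l ^ 2 * (x ^ 2 * (u x) ^ 2) + (-(3 * l)) * (u x) ^ 2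
          + (-(deriv F₂ x))) (Ioi (0 : ℝ)) := h3.add hIE.neg
    have hIEneg : IntegrableOn (fun x => -(deriv F₂ x)) (Ioi (0 : ℝ)) := hIE.neg
    have hIFl : IntegrableOn (fun x => l * deriv F₁ x) (Ioi (0 : ℝ)) := hIF.const_mul l
    rw [integral_add h4 hIFl, integral_add h3 hIEneg, integral_add h2 (hIC.const_mul _),
      integral_add hIA (hIB.const_mul _), integral_neg,
      integral_const_mul, integral_const_mul, integral_const_mul] at hnn
    rw [hI1, hI2] at hnn
    rw [← hD, ← hX, ← hS] at hnn
    nlinarith [hnn, sq_nonneg l]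
  have hdisc := discrim_le_zero quad
  rw [discrim] at hdisc
  nlinarith [hdisc, setIntegral_nonneg (μ := volume) measurableSet_Ioi
    (fun x (_ : x ∈ Ioi (0:ℝ)) => sq_nonneg (deriv u x)),
    setIntegral_nonneg (μ := volume) measurableSet_Ioi
    (fun x (hx : x ∈ Ioi (0:ℝ)) => mul_nonneg (sq_nonneg x) (sq_nonneg (u x)))]
end

section
/- For every u ∈ C_c^∞ of the open half-space ℝ^{n-1} × (0,∞), one has (∫ |∇u|² dx)·(∫ |x|²|u|² dx) ≥ ((n+2)²/4)·(∫ |u|² dx)², where all integrals are over the half-space. -/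
open MeasureTheory Set

namespace HUPaux

open RealInnerProductSpace

variable {n : ℕ}

noncomputable def D (f : EuclideanSpace ℝ (Fin n) → ℝ) (x : EuclideanSpace ℝ (Fin n)) (i : Fin n) : ℝ :=
  fderiv ℝ f x (EuclideanSpace.single i 1)

lemma D_proj (j : Fin n) (x : EuclideanSpace ℝ (Fin n)) (i : Fin n) :
    D (fun y => y j) x i = if j = i then 1 else 0 := by
  have : (fun y : EuclideanSpace ℝ (Fin n) => y j) = ⇑(EuclideanSpace.proj j) := rfl
  rw [D, this, ContinuousLinearMap.fderiv]
  show (EuclideanSpace.single i (1:ℝ)) j = _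
  rw [EuclideanSpace.single_apply]

lemma diff_proj (j : Fin n) (x : EuclideanSpace ℝ (Fin n)) :
    DifferentiableAt ℝ (fun y : EuclideanSpace ℝ (Fin n) => y j) x :=
  (EuclideanSpace.proj j : EuclideanSpace ℝ (Fin n) →L[ℝ] ℝ).differentiableAt

lemma contDiff_proj (j : Fin n) :
    ContDiff ℝ (⊤ : ℕ∞) (fun y : EuclideanSpace ℝ (Fin n) => y j) :=
  (EuclideanSpace.proj j : EuclideanSpace ℝ (Fin n) →L[ℝ] ℝ).contDiff

lemma D_mul {f g : EuclideanSpace ℝ (Fin n) → ℝ} {x : EuclideanSpace ℝ (Fin n)}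
    (hf : DifferentiableAt ℝ f x) (hg : DifferentiableAt ℝ g x) (i : Fin n) :
    D (fun y => f y * g y) x i = f x * D g x i + D f x i * g x := by
  rw [D, fderiv_fun_mul hf hg]
  simp [D]
  ring

lemma D_sq {f : EuclideanSpace ℝ (Fin n) → ℝ} {x : EuclideanSpace ℝ (Fin n)}
    (hf : DifferentiableAt ℝ f x) (i : Fin n) :
    D (fun y => f y ^ 2) x i = 2 * f x * D f x i := by
  have : (fun y => f y ^ 2) = fun y => f y * f y := by funext y; ring
  rw [this, D_mul hf hf]; ring


lemma norm_clm_sq (L : EuclideanSpace ℝ (Fin n) →L[ℝ] ℝ) :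
    ‖L‖^2 = ∑ i, (L (EuclideanSpace.single i 1))^2 := by
  set y := (InnerProductSpace.toDual ℝ (EuclideanSpace ℝ (Fin n))).symm L with hy
  have hL : ∀ z, L z = ⟪y, z⟫ := fun z => by
    rw [hy, InnerProductSpace.toDual_symm_apply]
  have h1 : ‖L‖ = ‖y‖ := ((InnerProductSpace.toDual ℝ _).symm.norm_map L).symm
  rw [h1]
  have h2 : ∀ i, L (EuclideanSpace.single i 1) = y i := by
    intro i; rw [hL, EuclideanSpace.inner_single_right]; simp
  simp_rw [h2]
  rw [EuclideanSpace.norm_eq, Real.sq_sqrt (by positivity)]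
  simp [sq_abs]

lemma norm_euc_sq (x : EuclideanSpace ℝ (Fin n)) : ‖x‖^2 = ∑ i, (x i)^2 := by
  rw [EuclideanSpace.norm_eq, Real.sq_sqrt (by positivity)]
  simp [sq_abs]

lemma hcs_aux {F G : EuclideanSpace ℝ (Fin n) → ℝ} (hG : HasCompactSupport G)
    (h : ∀ x, x ∉ tsupport G → F x = 0) : HasCompactSupport F := by
  apply IsCompact.of_isClosed_subset hG (isClosed_tsupport F)
  exact closure_minimal (fun x hx => by
    by_contra hc; exact hx (h x hc)) (isClosed_tsupport G)

lemma fderiv_eq_zero_off {F G : EuclideanSpace ℝ (Fin n) → ℝ}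
    (hF : ∀ y, y ∉ tsupport G → F y = 0) {x : EuclideanSpace ℝ (Fin n)}
    (hx : x ∉ tsupport G) : fderiv ℝ F x = 0 := by
  have h : F =ᶠ[nhds x] (fun _ => 0) := by
    filter_upwards [(isClosed_tsupport G).isOpen_compl.mem_nhds hx] with y hy
    exact hF y hy
  rw [h.fderiv_eq]
  exact fderiv_const_apply 0

lemma D_cont {g : EuclideanSpace ℝ (Fin n) → ℝ} (hg : ContDiff ℝ (⊤ : ℕ∞) g) (i : Fin n) :
    Continuous fun x => D g x i := by
  have := (hg.fderiv_right (m := (⊤ : ℕ∞)) (by norm_cast)).continuous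
  exact (ContinuousLinearMap.apply ℝ ℝ (EuclideanSpace.single i 1)).continuous.comp this

lemma D_integrable {g : EuclideanSpace ℝ (Fin n) → ℝ} (hg : ContDiff ℝ (⊤ : ℕ∞) g)
    (hsupp : HasCompactSupport g) (i : Fin n) :
    Integrable (fun x => D g x i) := by
  refine (D_cont hg i).integrable_of_hasCompactSupport (hcs_aux hsupp fun x hx => ?_)
  have : fderiv ℝ g x = 0 := by
    by_contra hc
    exact hx (support_fderiv_subset ℝ (f := g) hc)
  simp [D, this]

lemma integral_D_eq_zero {g : EuclideanSpace ℝ (Fin n) → ℝ} (hg : ContDiff ℝ (⊤ : ℕ∞) g)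
    (hsupp : HasCompactSupport g) (i : Fin n) :
    ∫ x, D g x i = 0 := by
  have hdg : Differentiable ℝ g := hg.differentiable (by simp)
  have h1 : Integrable (fun x =>
      fderiv ℝ (fun _ : EuclideanSpace ℝ (Fin n) => (1:ℝ)) x (EuclideanSpace.single i 1) * g x) := by
    simpa [fderiv_fun_const] using integrable_zero (EuclideanSpace ℝ (Fin n)) ℝ volume
  have h2 : Integrable (fun x => (1:ℝ) * D g x i) := by
    simpa using D_integrable hg hsupp i
  have h3 : Integrable (fun x => (1:ℝ) * g x) := by
    simpa using hg.continuous.integrable_of_hasCompactSupport hsupp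
  have := integral_mul_fderiv_eq_neg_fderiv_mul_of_integrable h1 h2 h3
    (fun x _ => differentiableAt_const (1:ℝ)) (fun x _ => hdg x)
  simpa [fderiv_fun_const, D] using this

end HUPaux

open HUPaux

/-- Heisenberg Uncertainty Principle on the half-space `ℝ^{n-1} × (0,∞)`
(the last coordinate is positive), with constant `(n + 2)² / 4`. -/
theorem hup_halfspace (n : ℕ) (hn : 1 ≤ n)
    (u : EuclideanSpace ℝ (Fin n) → ℝ) (hu : ContDiff ℝ (⊤ : ℕ∞) u)
    (hsupp : HasCompactSupport u)
    (hO : tsupport u ⊆ {x : EuclideanSpace ℝ (Fin n) | ∀ i : Fin n, n - 1 ≤ (i : ℕ) → 0 < x i}) :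
    (∫ x in {x : EuclideanSpace ℝ (Fin n) | ∀ i : Fin n, n - 1 ≤ (i : ℕ) → 0 < x i},
        ‖fderiv ℝ u x‖ ^ 2) *
      (∫ x in {x : EuclideanSpace ℝ (Fin n) | ∀ i : Fin n, n - 1 ≤ (i : ℕ) → 0 < x i},
        ‖x‖ ^ 2 * (u x) ^ 2)
      ≥ (((n : ℝ) + 2) ^ 2 / 4) *
        (∫ x in {x : EuclideanSpace ℝ (Fin n) | ∀ i : Fin n, n - 1 ≤ (i : ℕ) → 0 < x i},
          (u x) ^ 2) ^ 2 := by
  classical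
  have hu' : ContDiff ℝ (⊤ : ℕ∞) u := hu.of_le (by simp)
  set lst : Fin n := ⟨n - 1, by omega⟩ with hlst
  have hmem : ∀ x : EuclideanSpace ℝ (Fin n),
      (x ∈ {x : EuclideanSpace ℝ (Fin n) | ∀ i : Fin n, n - 1 ≤ (i : ℕ) → 0 < x i}) ↔ 0 < x lst := by
    intro x
    constructor
    · intro h; exact h lst (by simp [hlst])
    · intro h i hi
      have hieq : i = lst := by
        apply Fin.ext
        have := i.isLt
        simp only [hlst]
        omega
      rwa [hieq]
  have hnots : ∀ x : EuclideanSpace ℝ (Fin n),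
      x ∉ {x : EuclideanSpace ℝ (Fin n) | ∀ i : Fin n, n - 1 ≤ (i : ℕ) → 0 < x i} →
      x ∉ tsupport u := fun x hx hmemt => hx (hO hmemt)
  have e1 : (∫ x in {x : EuclideanSpace ℝ (Fin n) | ∀ i : Fin n, n - 1 ≤ (i : ℕ) → 0 < x i},
      ‖fderiv ℝ u x‖ ^ 2) = ∫ x, ‖fderiv ℝ u x‖ ^ 2 := by
    apply setIntegral_eq_integral_of_forall_compl_eq_zero
    intro x hx
    rw [fderiv_eq_zero_off (G := u) (fun y hy => image_eq_zero_of_notMem_tsupport hy) (hnots x hx)]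
    simp
  have e2 : (∫ x in {x : EuclideanSpace ℝ (Fin n) | ∀ i : Fin n, n - 1 ≤ (i : ℕ) → 0 < x i},
      ‖x‖ ^ 2 * (u x) ^ 2) = ∫ x, ‖x‖ ^ 2 * (u x) ^ 2 := by
    apply setIntegral_eq_integral_of_forall_compl_eq_zero
    intro x hx
    rw [image_eq_zero_of_notMem_tsupport (hnots x hx)]
    ring
  have e3 : (∫ x in {x : EuclideanSpace ℝ (Fin n) | ∀ i : Fin n, n - 1 ≤ (i : ℕ) → 0 < x i},
      (u x) ^ 2) = ∫ x, (u x) ^ 2 := by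
    apply setIntegral_eq_integral_of_forall_compl_eq_zero
    intro x hx
    rw [image_eq_zero_of_notMem_tsupport (hnots x hx)]
    ring
  rw [e1, e2, e3]
  by_cases h0 : u = 0
  · subst h0
    simp only [Pi.zero_apply, show (0 : EuclideanSpace ℝ (Fin n) → ℝ) = fun _ => (0:ℝ) from rfl,
      fderiv_fun_const]
    simp
  -- main case
  have hne : (tsupport u).Nonempty :=
    (Function.support_nonempty_iff.mpr h0).mono subset_closure
  obtain ⟨x₀, hx₀, hmin⟩ := hsupp.exists_isMinOn hne
    ((contDiff_proj lst).continuous.continuousOn)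
  set δ := x₀ lst with hδdef
  have hδ : 0 < δ := (hmem x₀).1 (hO hx₀)
  have hzero : ∀ x : EuclideanSpace ℝ (Fin n), x lst < δ → u x = 0 := by
    intro x hx
    by_contra hc
    exact absurd (hmin (subset_closure (Function.mem_support.2 hc))) (not_le.2 hx)
  set v : EuclideanSpace ℝ (Fin n) → ℝ := fun x => u x / x lst with hvdef
  have hvx : ∀ x, v x = u x / x lst := fun _ => rfl
  have huv : ∀ x, u x = x lst * v x := by
    intro x
    rcases eq_or_ne (x lst) 0 with h | h
    · rw [hzero x (by rw [h]; exact hδ), hvx, hzero x (by rw [h]; exact hδ)]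
      simp
    · rw [hvx]; field_simp
  have hvs : HasCompactSupport v := hcs_aux hsupp (fun x hx => by
    rw [hvx, image_eq_zero_of_notMem_tsupport hx, zero_div])
  have hv : ContDiff ℝ (⊤ : ℕ∞) v := by
    rw [contDiff_iff_contDiffAt]
    intro x
    rcases lt_or_ge (x lst) δ with h | h
    · have hev : v =ᶠ[nhds x] fun _ => 0 := by
        have ho : IsOpen {y : EuclideanSpace ℝ (Fin n) | y lst < δ} :=
          isOpen_lt (contDiff_proj lst).continuous continuous_const
        filter_upwards [ho.mem_nhds h] with y hy
        rw [hvx, hzero y hy, zero_div]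
      exact (contDiffAt_const (c := (0:ℝ))).congr_of_eventuallyEq hev
    · have hx0 : x lst ≠ 0 := ne_of_gt (lt_of_lt_of_le hδ h)
      rw [hvdef]
      exact (hu'.contDiffAt).div ((contDiff_proj lst).contDiffAt) hx0
  have hdv : ∀ x, DifferentiableAt ℝ v x :=
    fun x => (hv.differentiable (by simp)).differentiableAt
  have hufun : u = fun y => y lst * v y := funext huv
  -- pointwise derivative computations
  have hDu : ∀ x i, D u x i = (if lst = i then 1 else 0) * v x + x lst * D v x i := by
    intro x i
    rw [hufun, D_mul (diff_proj lst x) (hdv x), D_proj]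
    ring
  have hDv2 : ∀ x (i : Fin n), D (fun y => v y ^ 2) x i = 2 * v x * D v x i :=
    fun x i => D_sq (hdv x) i
  have hP2 : ∀ x, D (fun y => y lst * v y ^ 2) x lst
      = v x ^ 2 + 2 * x lst * v x * D v x lst := by
    intro x
    rw [D_mul (diff_proj lst x) ((hdv x).fun_pow 2), hDv2, D_proj]
    simp
    ring
  have ht2 : ∀ x (i : Fin n), D (fun y : EuclideanSpace ℝ (Fin n) => (y lst)^2) x i
      = 2 * x lst * (if lst = i then 1 else 0) := by
    intro x i
    rw [D_sq (diff_proj lst x), D_proj]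
  have hG : ∀ (i : Fin n) x, D (fun y => y i * (v y ^ 2 * (y lst) ^ 2)) x i
      = v x ^ 2 * (x lst) ^ 2
        + x i * (v x ^ 2 * (2 * x lst * (if lst = i then 1 else 0))
          + 2 * v x * D v x i * (x lst)^2) := by
    intro i x
    rw [D_mul (diff_proj i x) (((hdv x).fun_pow 2).fun_mul ((diff_proj lst x).fun_pow 2)),
        D_mul ((hdv x).fun_pow 2) ((diff_proj lst x).fun_pow 2), hDv2, ht2, D_proj]
    simp
    ring
  -- continuity and integrability
  have hvc : Continuous v := hv.continuous
  have hDvc : ∀ i, Continuous fun x => D v x i := fun i => D_cont hv i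
  have hprojc : ∀ j : Fin n, Continuous fun x : EuclideanSpace ℝ (Fin n) => x j :=
    fun j => (contDiff_proj j).continuous
  have hDv0 : ∀ x, x ∉ tsupport v → ∀ i, D v x i = 0 := by
    intro x hx i
    have h : fderiv ℝ v x = 0 := by
      by_contra hc; exact hx (support_fderiv_subset ℝ (f := v) hc)
    simp [D, h]
  have hv0 : ∀ x, x ∉ tsupport v → v x = 0 :=
    fun x hx => image_eq_zero_of_notMem_tsupport hx
  have hIv : ∀ {F : EuclideanSpace ℝ (Fin n) → ℝ}, Continuous F →
      (∀ x, x ∉ tsupport v → F x = 0) → Integrable F :=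
    fun hc hz => hc.integrable_of_hasCompactSupport (hcs_aux hvs hz)
  have hIa : Integrable (fun x : EuclideanSpace ℝ (Fin n) => (x lst)^2 * ∑ i, (D v x i)^2) :=
    hIv (((hprojc lst).pow 2).mul (continuous_finset_sum _ fun i _ => (hDvc i).pow 2))
      (fun x hx => by simp [hDv0 x hx])
  have hIX : Integrable (fun x : EuclideanSpace ℝ (Fin n) =>
      (x lst)^2 * (v x * ∑ i, x i * D v x i)) :=
    hIv (((hprojc lst).pow 2).mul (hvc.mul
        (continuous_finset_sum _ fun i _ => (hprojc i).mul (hDvc i))))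
      (fun x hx => by simp [hv0 x hx])
  have hIc : Integrable (fun x : EuclideanSpace ℝ (Fin n) => (x lst)^2 * v x^2) :=
    hIv (((hprojc lst).pow 2).mul (hvc.pow 2)) (fun x hx => by simp [hv0 x hx])
  have hIb : Integrable (fun x : EuclideanSpace ℝ (Fin n) =>
      (∑ i, (x i)^2) * ((x lst)^2 * v x^2)) :=
    hIv ((continuous_finset_sum _ fun i _ => (hprojc i).pow 2).mul
        (((hprojc lst).pow 2).mul (hvc.pow 2)))
      (fun x hx => by simp [hv0 x hx])
  have hg2 : ContDiff ℝ (⊤:ℕ∞) (fun y : EuclideanSpace ℝ (Fin n) => y lst * v y ^ 2) :=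
    (contDiff_proj lst).mul (hv.pow 2)
  have hg2s : HasCompactSupport (fun y : EuclideanSpace ℝ (Fin n) => y lst * v y ^ 2) :=
    hcs_aux hvs (fun x hx => by simp [hv0 x hx])
  have hgi : ∀ i : Fin n, ContDiff ℝ (⊤:ℕ∞)
      (fun y : EuclideanSpace ℝ (Fin n) => y i * (v y ^ 2 * (y lst)^2)) :=
    fun i => (contDiff_proj i).mul ((hv.pow 2).mul ((contDiff_proj lst).pow 2))
  have hgis : ∀ i : Fin n, HasCompactSupport
      (fun y : EuclideanSpace ℝ (Fin n) => y i * (v y ^ 2 * (y lst)^2)) :=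
    fun i => hcs_aux hvs (fun x hx => by simp [hv0 x hx])
  set a := ∫ x, (x lst)^2 * ∑ i, (D v x i)^2 with ha
  set X := ∫ x, (x lst)^2 * (v x * ∑ i, x i * D v x i) with hX
  set c := ∫ x, (x lst)^2 * v x^2 with hc
  set b := ∫ x, (∑ i, (x i)^2) * ((x lst)^2 * v x^2) with hb
  have hC3 : ∫ x, (u x) ^ 2 = c :=
    integral_congr_ae (Filter.Eventually.of_forall fun x => by
      show u x ^ 2 = x lst ^ 2 * v x ^ 2
      rw [huv x]; ring)
  have hC2 : ∫ x, ‖x‖ ^ 2 * (u x) ^ 2 = b :=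
    integral_congr_ae (Filter.Eventually.of_forall fun x => by
      show ‖x‖ ^ 2 * u x ^ 2 = (∑ i, (x i)^2) * (x lst ^ 2 * v x ^ 2)
      rw [norm_euc_sq, huv x]; ring)
  have hC1 : ∫ x, ‖fderiv ℝ u x‖ ^ 2 = a := by
    have step1 : ∀ x, ‖fderiv ℝ u x‖ ^ 2
        = (x lst)^2 * ∑ i, (D v x i)^2 + D (fun y => y lst * v y ^ 2) x lst := by
      intro x
      rw [norm_clm_sq, hP2 x]
      have hd : ∀ i, (fderiv ℝ u x) (EuclideanSpace.single i 1) = D u x i := fun i => rfl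
      simp_rw [hd, hDu x]
      have expand : ∀ i : Fin n, ((if lst = i then 1 else 0) * v x + x lst * D v x i)^2
          = (if lst = i then v x ^2 + 2 * x lst * v x * D v x i else 0)
            + (x lst)^2 * (D v x i)^2 := by
        intro i; split <;> ring
      simp_rw [expand, Finset.sum_add_distrib, Finset.sum_ite_eq, Finset.mem_univ, if_true,
        ← Finset.mul_sum]
      ring
    calc ∫ x, ‖fderiv ℝ u x‖ ^ 2
        = ∫ x, ((x lst)^2 * ∑ i, (D v x i)^2 + D (fun y => y lst * v y ^ 2) x lst) :=
          integral_congr_ae (Filter.Eventually.of_forall step1)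
      _ = a + ∫ x, D (fun y => y lst * v y ^ 2) x lst :=
          integral_add hIa (D_integrable hg2 hg2s lst)
      _ = a := by rw [integral_D_eq_zero hg2 hg2s lst, add_zero]
  have hC4 : ((n:ℝ)+2) * c + 2 * X = 0 := by
    have step : ∀ x, ((n:ℝ)+2) * ((x lst)^2 * v x^2)
        + 2 * ((x lst)^2 * (v x * ∑ i, x i * D v x i))
        = ∑ i, D (fun y => y i * (v y ^ 2 * (y lst)^2)) x i := by
      intro x
      simp_rw [hG]
      have expand : ∀ i : Fin n,
          v x ^2 * (x lst)^2 + x i * (v x ^2 * (2 * x lst * (if lst = i then 1 else 0))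
            + 2 * v x * D v x i * (x lst)^2)
          = (if lst = i then 2 * x lst * v x ^2 * x i else 0)
            + ((x lst)^2 * v x^2 + (2 * (x lst)^2 * v x) * (x i * D v x i)) := by
        intro i; split <;> ring
      simp_rw [expand, Finset.sum_add_distrib, Finset.sum_ite_eq, Finset.mem_univ, if_true,
        Finset.sum_const, ← Finset.mul_sum, Finset.card_univ, Fintype.card_fin, nsmul_eq_mul]
      push_cast
      ring
    have hI1 : Integrable (fun x : EuclideanSpace ℝ (Fin n) =>
        ((n:ℝ)+2) * ((x lst)^2 * v x^2)) := hIc.const_mul _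
    have hI2 : Integrable (fun x : EuclideanSpace ℝ (Fin n) =>
        2 * ((x lst)^2 * (v x * ∑ i, x i * D v x i))) := hIX.const_mul _
    have eadd : (∫ x, (((n:ℝ)+2) * ((x lst)^2 * v x^2)
            + 2 * ((x lst)^2 * (v x * ∑ i, x i * D v x i))))
        = (∫ x, ((n:ℝ)+2) * ((x lst)^2 * v x^2))
          + ∫ x, 2 * ((x lst)^2 * (v x * ∑ i, x i * D v x i)) :=
      integral_add hI1 hI2
    have em1 : (∫ x, ((n:ℝ)+2) * ((x lst)^2 * v x^2)) = ((n:ℝ)+2) * c := by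
      rw [hc]; exact integral_const_mul _ _
    have em2 : (∫ x, 2 * ((x lst)^2 * (v x * ∑ i, x i * D v x i))) = 2 * X := by
      rw [hX]; exact integral_const_mul _ _
    have lhs_eq : ((n:ℝ)+2) * c + 2 * X
        = ∫ x, (((n:ℝ)+2) * ((x lst)^2 * v x^2)
            + 2 * ((x lst)^2 * (v x * ∑ i, x i * D v x i))) := by
      rw [eadd, em1, em2]
    rw [lhs_eq, integral_congr_ae (Filter.Eventually.of_forall step),
      integral_finset_sum _ (fun i _ => D_integrable (hgi i) (hgis i) i)]
    exact Finset.sum_eq_zero fun i _ => integral_D_eq_zero (hgi i) (hgis i) i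
  have hC5 : ∀ β : ℝ, 0 ≤ b * (β * β) + (2 * X) * β + a := by
    intro β
    have expand : ∀ x : EuclideanSpace ℝ (Fin n),
        (∑ i, ((x lst) * D v x i + β * (x i * ((x lst) * v x)))^2)
        = ((x lst)^2 * ∑ i, (D v x i)^2)
          + ((2*β) * ((x lst)^2 * (v x * ∑ i, x i * D v x i))
            + (β*β) * ((∑ i, (x i)^2) * ((x lst)^2 * v x^2))) := by
      intro x
      have e : ∀ i : Fin n, ((x lst) * D v x i + β * (x i * ((x lst) * v x)))^2
          = (x lst)^2 * (D v x i)^2 + ((2*β*(x lst)^2*(v x)) * (x i * D v x i)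
            + (β*β*(x lst)^2*(v x)^2) * ((x i)^2)) := by
        intro i; ring
      simp_rw [e, Finset.sum_add_distrib, ← Finset.mul_sum]
      ring
    have hIG : Integrable (fun x : EuclideanSpace ℝ (Fin n) =>
        (2*β) * ((x lst)^2 * (v x * ∑ i, x i * D v x i))) := hIX.const_mul _
    have hIH : Integrable (fun x : EuclideanSpace ℝ (Fin n) =>
        (β*β) * ((∑ i, (x i)^2) * ((x lst)^2 * v x^2))) := hIb.const_mul _
    have hIGH : Integrable (fun x : EuclideanSpace ℝ (Fin n) =>
        (2*β) * ((x lst)^2 * (v x * ∑ i, x i * D v x i))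
          + (β*β) * ((∑ i, (x i)^2) * ((x lst)^2 * v x^2))) := hIG.add hIH
    have eA : (∫ x, (((x lst)^2 * ∑ i, (D v x i)^2)
          + ((2*β) * ((x lst)^2 * (v x * ∑ i, x i * D v x i))
            + (β*β) * ((∑ i, (x i)^2) * ((x lst)^2 * v x^2)))))
        = (∫ x, (x lst)^2 * ∑ i, (D v x i)^2)
          + ∫ x, ((2*β) * ((x lst)^2 * (v x * ∑ i, x i * D v x i))
            + (β*β) * ((∑ i, (x i)^2) * ((x lst)^2 * v x^2))) :=
      integral_add hIa hIGH
    have eB : (∫ x, ((2*β) * ((x lst)^2 * (v x * ∑ i, x i * D v x i))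
            + (β*β) * ((∑ i, (x i)^2) * ((x lst)^2 * v x^2))))
        = (∫ x, (2*β) * ((x lst)^2 * (v x * ∑ i, x i * D v x i)))
          + ∫ x, (β*β) * ((∑ i, (x i)^2) * ((x lst)^2 * v x^2)) :=
      integral_add hIG hIH
    have eG : (∫ x, (2*β) * ((x lst)^2 * (v x * ∑ i, x i * D v x i))) = (2*β) * X := by
      rw [hX]; exact integral_const_mul _ _
    have eH : (∫ x, (β*β) * ((∑ i, (x i)^2) * ((x lst)^2 * v x^2))) = (β*β) * b := by
      rw [hb]; exact integral_const_mul _ _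
    have key : b * (β*β) + (2*X)*β + a
        = ∫ x, ∑ i, ((x lst) * D v x i + β * (x i * ((x lst) * v x)))^2 := by
      rw [integral_congr_ae (Filter.Eventually.of_forall expand), eA, eB, eG, eH, ha]
      ring
    rw [key]
    exact integral_nonneg fun x => Finset.sum_nonneg fun i _ => sq_nonneg _
  have hd := discrim_le_zero hC5
  rw [discrim] at hd
  rw [hC1, hC2, hC3]
  have hX2 : (2*X)^2 = (((n:ℝ)+2) * c)^2 := by
    have : 2*X = -(((n:ℝ)+2) * c) := by linarith
    rw [this]; ring
  nlinarith [hd, hX2, sq_nonneg (((n:ℝ)+2)*c)]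
end

section
/- For u(x) = x·e^{-β x²} on (0,∞) with β > 0, one has (∫₀^∞ |u'(x)|² dx)·(∫₀^∞ x² |u(x)|² dx) = (9/4)·(∫₀^∞ |u(x)|² dx)². -/
/-!
With `b = 2β`, all three integrals are Gaussian moments `M n = ∫₀^∞ xⁿ e^{-b x²} dx`:
`u'(x)² = (1 - b x²)² e^{-b x²}` gives `M 0 - 2b M 2 + b² M 4`, and the other two are `M 4`
and `M 2`. The recurrence `M (n + 2) = (n + 1) / (2b) · M n`, which is `Γ(s + 1) = s Γ(s)` in
disguise, expresses everything through `M 0`: the kinetic term is `3/4 · M 0`, and both sides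
equal `9 (M 0)² / (16 b²)`.
-/

open MeasureTheory Set Real

theorem integral_rpow_add_two_mul_exp_neg_mul_sq {b s : ℝ} (hb : 0 < b) (hs : -1 < s) :
    ∫ x in Ioi (0 : ℝ), x ^ (s + 2) * exp (-b * x ^ 2)
      = (s + 1) / (2 * b) * ∫ x in Ioi (0 : ℝ), x ^ s * exp (-b * x ^ 2) := by
  simp_rw [← rpow_two]
  rw [integral_rpow_mul_exp_neg_mul_rpow two_pos (by linarith) hb,
    integral_rpow_mul_exp_neg_mul_rpow two_pos hs hb,
    show (s + 2 + 1) / 2 = (s + 1) / 2 + 1 by ring, Gamma_add_one (by linarith),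
    show -(s + 2 + 1) / 2 = -(s + 1) / 2 + -1 by ring, rpow_add hb, rpow_neg_one]
  field_simp

theorem integral_pow_add_two_mul_exp_neg_mul_sq {b : ℝ} (hb : 0 < b) (n : ℕ) :
    ∫ x in Ioi (0 : ℝ), x ^ (n + 2) * exp (-b * x ^ 2)
      = (n + 1) / (2 * b) * ∫ x in Ioi (0 : ℝ), x ^ n * exp (-b * x ^ 2) := by
  exact_mod_cast
    integral_rpow_add_two_mul_exp_neg_mul_sq hb (neg_one_lt_zero.trans_le n.cast_nonneg)

theorem integrableOn_pow_mul_exp_neg_mul_sq {b : ℝ} (hb : 0 < b) (n : ℕ) :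
    IntegrableOn (fun x : ℝ => x ^ n * exp (-b * x ^ 2)) (Ioi 0) := by
  exact_mod_cast integrableOn_rpow_mul_exp_neg_mul_sq hb (neg_one_lt_zero.trans_le n.cast_nonneg)

theorem hasDerivAt_mul_exp_neg_mul_sq (β x : ℝ) :
    HasDerivAt (fun x => x * exp (-β * x ^ 2)) ((1 - 2 * β * x ^ 2) * exp (-β * x ^ 2)) x := by
  refine ((hasDerivAt_id' x).mul ((hasDerivAt_pow 2 x).const_mul (-β)).exp).congr_deriv ?_
  push_cast
  ring

/-- The function `u(x) = x e^{-β x²}` achieves equality in the Heisenberg Uncertainty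
Principle on the half-line `(0, ∞)` with the sharp constant `9/4`. -/
theorem hup_halfline_extremal (β : ℝ) (hβ : 0 < β) :
    let u : ℝ → ℝ := fun x => x * Real.exp (-β * x ^ 2)
    (∫ x in Ioi (0 : ℝ), (deriv u x) ^ 2) * (∫ x in Ioi (0 : ℝ), x ^ 2 * (u x) ^ 2)
      = (9 / 4 : ℝ) * (∫ x in Ioi (0 : ℝ), (u x) ^ 2) ^ 2 := by
  intro u
  set b := 2 * β with hb_def
  have hb : 0 < b := by positivity
  set M : ℕ → ℝ := fun n => ∫ x in Ioi (0 : ℝ), x ^ n * exp (-b * x ^ 2)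
  have hsq : ∀ x, exp (-β * x ^ 2) ^ 2 = exp (-b * x ^ 2) := fun x => by
    rw [← exp_nat_mul, hb_def]; push_cast; ring_nf
  have hderiv : ∀ x, deriv u x ^ 2
      = x ^ 0 * exp (-b * x ^ 2) - 2 * b * (x ^ 2 * exp (-b * x ^ 2))
        + b ^ 2 * (x ^ 4 * exp (-b * x ^ 2)) := fun x => by
    rw [(hasDerivAt_mul_exp_neg_mul_sq β x).deriv, mul_pow, hsq]; ring
  have hkinetic : ∫ x in Ioi (0 : ℝ), deriv u x ^ 2 = M 0 - 2 * b * M 2 + b ^ 2 * M 4 := by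
    have hI := integrableOn_pow_mul_exp_neg_mul_sq hb
    simp_rw [hderiv]
    rw [integral_add, integral_sub, integral_const_mul, integral_const_mul]
    exacts [hI 0, (hI 2).const_mul _, (hI 0).sub ((hI 2).const_mul _), (hI 4).const_mul _]
  have hmass : ∫ x in Ioi (0 : ℝ), u x ^ 2 = M 2 := by
    simp only [u, mul_pow, hsq, M]
  have hvariance : ∫ x in Ioi (0 : ℝ), x ^ 2 * u x ^ 2 = M 4 := by
    simp only [u, mul_pow, hsq, M, ← mul_assoc, ← pow_add]
  have hM2 : M 2 = 1 / (2 * b) * M 0 := by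
    convert integral_pow_add_two_mul_exp_neg_mul_sq hb 0 using 2; norm_num
  have hM4 : M 4 = 3 / (2 * b) * M 2 := by
    convert integral_pow_add_two_mul_exp_neg_mul_sq hb 2 using 2; norm_num
  rw [hkinetic, hmass, hvariance, hM4, hM2]
  field_simp
  ring
end

section
/- For every smooth compactly supported u on (0,∞) and every real α ≠ 0: α² ∫₀^∞ |u'|² dx + α^{-2} ∫₀^∞ x²|u|² dx − 3 ∫₀^∞ |u|² dx = α² ∫₀^∞ |d/dx ( u(x)/x · e^{x²/(2α²)} )|² x² e^{−x²/α²} dx. In particular α² ∫ |u'|² + α^{-2} ∫ x²|u|² ≥ 3 ∫ |u|². -/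
open MeasureTheory Set

/-- One-dimensional Heisenberg uncertainty identity on `(0,∞)`: for `α ≠ 0` and
`u ∈ C_c^∞((0,∞))`,
`α² ∫ |u'|² + α⁻² ∫ x²|u|² − 3 ∫ |u|²`
`  = α² ∫ |d/dx (u(x)/x · e^{x²/(2α²)})|² x² e^{−x²/α²}`,
and in particular `α² ∫ |u'|² + α⁻² ∫ x²|u|² ≥ 3 ∫ |u|²`. -/
theorem hup_halfline_identity (α : ℝ) (hα : α ≠ 0)
    (u : ℝ → ℝ) (hu : ContDiff ℝ (⊤ : ℕ∞) u) (hsupp : HasCompactSupport u)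
    (hO : tsupport u ⊆ Ioi (0 : ℝ)) :
    (α ^ 2 * (∫ x in Ioi (0 : ℝ), (deriv u x) ^ 2)
        + (α ^ 2)⁻¹ * (∫ x in Ioi (0 : ℝ), x ^ 2 * (u x) ^ 2)
        - 3 * (∫ x in Ioi (0 : ℝ), (u x) ^ 2)
      = α ^ 2 * ∫ x in Ioi (0 : ℝ),
          (deriv (fun t => u t / t * Real.exp (t ^ 2 / (2 * α ^ 2))) x) ^ 2
            * x ^ 2 * Real.exp (-x ^ 2 / α ^ 2))
    ∧ α ^ 2 * (∫ x in Ioi (0 : ℝ), (deriv u x) ^ 2)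
        + (α ^ 2)⁻¹ * (∫ x in Ioi (0 : ℝ), x ^ 2 * (u x) ^ 2)
      ≥ 3 * (∫ x in Ioi (0 : ℝ), (u x) ^ 2) := by
  have hα2 : (α : ℝ) ^ 2 ≠ 0 := pow_ne_zero 2 hα
  -- ε bound away from 0
  obtain ⟨ε, hε0, hεu⟩ : ∃ ε > (0:ℝ), ∀ x < ε, u x = 0 := by
    rcases eq_or_ne (tsupport u) ∅ with h | h
    · exact ⟨1, one_pos, fun x _ => image_eq_zero_of_notMem_tsupport (by simp [h])⟩
    · have hK : (tsupport u).Nonempty := nonempty_iff_ne_empty.2 h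
      have hmem := hsupp.sInf_mem hK
      exact ⟨sInf (tsupport u), hO hmem, fun x hx =>
        image_eq_zero_of_notMem_tsupport fun hxK =>
          absurd (csInf_le hsupp.bddBelow hxK) (not_le.2 hx)⟩
  set g : ℝ → ℝ := fun t => u t / t * Real.exp (t ^ 2 / (2 * α ^ 2)) with hgdef
  have hg0 : ∀ x < ε, g x = 0 := fun x hx => by simp [hgdef, hεu x hx]
  have hgsupp : Function.support g ⊆ Function.support u := fun x hx => by
    simp only [Function.mem_support] at hx ⊢
    intro h0; exact hx (by simp [hgdef, h0])
  have hgcs : HasCompactSupport g := hsupp.mono hgsupp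
  have hgsm : ContDiff ℝ (⊤ : ℕ∞) g := by
    rw [contDiff_iff_contDiffAt]
    intro x
    rcases lt_or_ge x ε with hx | hx
    · have hev : g =ᶠ[nhds x] (fun _ => 0) := by
        filter_upwards [Iio_mem_nhds hx] with y hy using hg0 y hy
      exact (contDiffAt_const (c := (0:ℝ))).congr_of_eventuallyEq hev
    · have hx0 : (0:ℝ) < x := lt_of_lt_of_le hε0 hx
      exact (hu.contDiffAt.div contDiffAt_id hx0.ne').mul
        ((Real.contDiff_exp.comp ((contDiff_id.pow 2).div_const _)).contDiffAt)
  have hgd : Differentiable ℝ g := hgsm.differentiable (by simp)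
  -- u in terms of g
  have hu_eq : ∀ x, u x = g x * (x * Real.exp (-x ^ 2 / (2 * α ^ 2))) := by
    intro x
    rcases eq_or_ne (u x) 0 with h0 | h0
    · simp [hgdef, h0]
    · have hx : (0:ℝ) < x := hO (subset_tsupport u (Function.mem_support.2 h0))
      have hx0 : x ≠ 0 := ne_of_gt hx
      have hee : Real.exp (-x ^ 2 / (2 * α ^ 2)) = (Real.exp (x ^ 2 / (2 * α ^ 2)))⁻¹ := by
        rw [neg_div, Real.exp_neg]
      simp only [hgdef]
      rw [hee]
      field_simp
  -- derivative of the Gaussian factor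
  have hE2 : ∀ x : ℝ, HasDerivAt (fun y : ℝ => Real.exp (-y ^ 2 / (2 * α ^ 2)))
      (Real.exp (-x ^ 2 / (2 * α ^ 2)) * (-x / α ^ 2)) x := by
    intro x
    have hp : HasDerivAt (fun y : ℝ => -y ^ 2 / (2 * α ^ 2)) (-x / α ^ 2) x := by
      have h := ((hasDerivAt_pow 2 x).neg).div_const (2 * α ^ 2)
      refine h.congr_deriv ?_
      field_simp
      ring
    exact (Real.hasDerivAt_exp _).comp x hp
  have hu' : ∀ x, HasDerivAt u
      ((deriv g x * x + g x * (1 - x ^ 2 / α ^ 2)) * Real.exp (-x ^ 2 / (2 * α ^ 2))) x := by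
    intro x
    have hfun : u = fun y => g y * (y * Real.exp (-y ^ 2 / (2 * α ^ 2))) := funext hu_eq
    have hd : HasDerivAt (fun y => g y * (y * Real.exp (-y ^ 2 / (2 * α ^ 2))))
        (deriv g x * (x * Real.exp (-x ^ 2 / (2 * α ^ 2)))
          + g x * (1 * Real.exp (-x ^ 2 / (2 * α ^ 2))
            + x * (Real.exp (-x ^ 2 / (2 * α ^ 2)) * (-x / α ^ 2)))) x :=
      ((hgd x).hasDerivAt).mul ((hasDerivAt_id x).mul (hE2 x))
    rw [← hfun] at hd
    convert hd using 1
    field_simp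
    ring
  -- the total-derivative function F and its derivative Φ
  set F : ℝ → ℝ := fun x => g x ^ 2 * ((α ^ 2 * x - x ^ 3) * Real.exp (-x ^ 2 / α ^ 2))
    with hFdef
  set Φ : ℝ → ℝ := fun x => Real.exp (-x ^ 2 / α ^ 2) *
      (2 * g x * deriv g x * (α ^ 2 * x - x ^ 3)
        + g x ^ 2 * (α ^ 2 - 5 * x ^ 2 + 2 * x ^ 4 / α ^ 2)) with hΦdef
  have hEA : ∀ x : ℝ, HasDerivAt (fun y : ℝ => Real.exp (-y ^ 2 / α ^ 2))
      (Real.exp (-x ^ 2 / α ^ 2) * (-(2 * x) / α ^ 2)) x := by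
    intro x
    have hp : HasDerivAt (fun y : ℝ => -y ^ 2 / α ^ 2) (-(2 * x) / α ^ 2) x := by
      have h := ((hasDerivAt_pow 2 x).neg).div_const (α ^ 2)
      refine h.congr_deriv ?_
      field_simp
      ring
    exact (Real.hasDerivAt_exp _).comp x hp
  have hF' : ∀ x, HasDerivAt F (Φ x) x := by
    intro x
    have hd : HasDerivAt F
        ((2 * g x ^ 1 * deriv g x) * ((α ^ 2 * x - x ^ 3) * Real.exp (-x ^ 2 / α ^ 2))
          + g x ^ 2 * ((α ^ 2 * 1 - 3 * x ^ 2) * Real.exp (-x ^ 2 / α ^ 2)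
            + (α ^ 2 * x - x ^ 3) * (Real.exp (-x ^ 2 / α ^ 2) * (-(2 * x) / α ^ 2)))) x := by
      exact (((hgd x).hasDerivAt).pow 2).mul
        ((((hasDerivAt_id x).const_mul (α ^ 2)).sub (hasDerivAt_pow 3 x)).mul (hEA x))
    convert hd using 1
    simp only [hΦdef]
    field_simp
    ring
  have hΦg : ∀ x, g x = 0 → Φ x = 0 := by
    intro x hgx
    simp [hΦdef, hgx]
  -- pointwise key identity on (0, ∞)
  have key : ∀ x ∈ Ioi (0:ℝ),
      α ^ 2 * (deriv u x) ^ 2 + (α ^ 2)⁻¹ * (x ^ 2 * (u x) ^ 2) - 3 * (u x) ^ 2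
        = α ^ 2 * ((deriv g x) ^ 2 * x ^ 2 * Real.exp (-x ^ 2 / α ^ 2)) + Φ x := by
    intro x hx
    have hee : Real.exp (-x ^ 2 / (2 * α ^ 2)) * Real.exp (-x ^ 2 / (2 * α ^ 2))
        = Real.exp (-x ^ 2 / α ^ 2) := by
      rw [← Real.exp_add]
      congr 1
      field_simp
      ring
    rw [(hu' x).deriv, hu_eq x]
    simp only [hΦdef]
    rw [← hee]
    field_simp
    ring
  -- integrability
  have hcs_of : ∀ {f h : ℝ → ℝ}, HasCompactSupport f → (∀ x, f x = 0 → h x = 0) →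
      HasCompactSupport h := by
    intro f h hf himp
    exact hf.mono fun x hx h0 => hx (himp x h0)
  have hduc : Continuous (deriv u) := hu.continuous_deriv (by simp)
  have hdgc : Continuous (deriv g) := hgsm.continuous_deriv (by simp)
  have hi1 : IntegrableOn (fun x => (deriv u x) ^ 2) (Ioi (0:ℝ)) := by
    exact ((hduc.pow 2).integrable_of_hasCompactSupport
      (hcs_of hsupp.deriv (fun x h0 => by simp [h0]))).integrableOn
  have hi2 : IntegrableOn (fun x => x ^ 2 * (u x) ^ 2) (Ioi (0:ℝ)) := by
    exact (((continuous_id.pow 2).mul (hu.continuous.pow 2)).integrable_of_hasCompactSupport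
      (hcs_of hsupp (fun x h0 => by simp [h0]))).integrableOn
  have hi3 : IntegrableOn (fun x => (u x) ^ 2) (Ioi (0:ℝ)) := by
    exact ((hu.continuous.pow 2).integrable_of_hasCompactSupport
      (hcs_of hsupp (fun x h0 => by simp [h0]))).integrableOn
  have hΦcont : Continuous Φ := by
    rw [hΦdef]
    have h1 : Continuous (fun x : ℝ => Real.exp (-x ^ 2 / α ^ 2)) :=
      Real.continuous_exp.comp ((continuous_id.pow 2).neg.div_const _)
    exact h1.mul (((((continuous_const.mul hgsm.continuous).mul hdgc).mul
      ((continuous_const.mul continuous_id).sub (continuous_id.pow 3)))).add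
      ((hgsm.continuous.pow 2).mul (((continuous_const.sub
        (continuous_const.mul (continuous_id.pow 2))).add
        ((continuous_const.mul (continuous_id.pow 4)).div_const _)))))
  have hΦcs : HasCompactSupport Φ := hcs_of hgcs hΦg
  have hiR : IntegrableOn
      (fun x => (deriv g x) ^ 2 * x ^ 2 * Real.exp (-x ^ 2 / α ^ 2)) (Ioi (0:ℝ)) := by
    have hc : Continuous (fun x => (deriv g x) ^ 2 * x ^ 2 * Real.exp (-x ^ 2 / α ^ 2)) :=
      ((hdgc.pow 2).mul (continuous_id.pow 2)).mul
        (Real.continuous_exp.comp ((continuous_id.pow 2).neg.div_const _))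
    have hcs : HasCompactSupport
        (fun x => (deriv g x) ^ 2 * x ^ 2 * Real.exp (-x ^ 2 / α ^ 2)) :=
      hcs_of hgcs.deriv (fun x h0 => by simp [h0])
    exact (hc.integrable_of_hasCompactSupport hcs).integrableOn
  have hiΦ : IntegrableOn Φ (Ioi (0:ℝ)) :=
    (hΦcont.integrable_of_hasCompactSupport hΦcs).integrableOn
  -- ∫ Φ over (0,∞) is zero
  have hΦ0 : (∫ x in Ioi (0:ℝ), Φ x) = 0 := by
    obtain ⟨R, hR⟩ := hgcs.isBounded.subset_closedBall 0
    set M : ℝ := max R 0 + 1 with hMdef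
    have hgz : ∀ x : ℝ, M ≤ |x| → g x = 0 := by
      intro x hx
      refine image_eq_zero_of_notMem_tsupport fun hmem => ?_
      have := hR hmem
      rw [Metric.mem_closedBall, Real.dist_eq, sub_zero] at this
      have : M ≤ R := le_trans hx this
      simp only [hMdef] at this
      nlinarith [le_max_left R (0:ℝ)]
    have hstep1 : (∫ x in Ioi (0:ℝ), Φ x) = ∫ x, Φ x :=
      setIntegral_eq_integral_of_forall_compl_eq_zero fun x hx =>
        hΦg x (hg0 x (lt_of_le_of_lt (not_lt.1 hx) hε0))
    have hstep2 : (∫ x, Φ x) = ∫ x in Ioc (-M) M, Φ x := by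
      refine (setIntegral_eq_integral_of_forall_compl_eq_zero fun x hx => ?_).symm
      refine hΦg x (hgz x ?_)
      simp only [mem_Ioc, not_and_or, not_lt, not_le] at hx
      rcases hx with hx | hx
      · rw [abs_of_nonpos (by nlinarith [le_max_right R (0:ℝ)] : x ≤ 0)]
        linarith
      · rw [abs_of_pos (by nlinarith [le_max_right R (0:ℝ)] : 0 < x)]
        linarith
    have hM0 : (-M : ℝ) ≤ M := by nlinarith [le_max_right R (0:ℝ)]
    have hstep3 : (∫ x in Ioc (-M) M, Φ x) = F M - F (-M) := by
      rw [← intervalIntegral.integral_of_le hM0]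
      exact intervalIntegral.integral_eq_sub_of_hasDerivAt (fun x _ => hF' x)
        (hΦcont.intervalIntegrable _ _)
    have hFM : F M = 0 := by
      have : g M = 0 := hgz M (by rw [abs_of_pos (by nlinarith [le_max_right R (0:ℝ)])])
      simp [hFdef, this]
    have hFM' : F (-M) = 0 := by
      have : g (-M) = 0 := hgz (-M)
        (by rw [abs_of_nonpos (by nlinarith [le_max_right R (0:ℝ)] : (-M:ℝ) ≤ 0)]; simp)
      simp [hFdef, this]
    rw [hstep1, hstep2, hstep3, hFM, hFM', sub_zero]
  -- assemble the identity
  have hmain : α ^ 2 * (∫ x in Ioi (0 : ℝ), (deriv u x) ^ 2)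
      + (α ^ 2)⁻¹ * (∫ x in Ioi (0 : ℝ), x ^ 2 * (u x) ^ 2)
      - 3 * (∫ x in Ioi (0 : ℝ), (u x) ^ 2)
      = α ^ 2 * ∫ x in Ioi (0 : ℝ),
          (deriv g x) ^ 2 * x ^ 2 * Real.exp (-x ^ 2 / α ^ 2) := by
    have hL : α ^ 2 * (∫ x in Ioi (0 : ℝ), (deriv u x) ^ 2)
        + (α ^ 2)⁻¹ * (∫ x in Ioi (0 : ℝ), x ^ 2 * (u x) ^ 2)
        - 3 * (∫ x in Ioi (0 : ℝ), (u x) ^ 2)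
        = ∫ x in Ioi (0:ℝ), (α ^ 2 * (deriv u x) ^ 2
            + (α ^ 2)⁻¹ * (x ^ 2 * (u x) ^ 2) - 3 * (u x) ^ 2) := by
      have hiA : IntegrableOn (fun x => α ^ 2 * (deriv u x) ^ 2
          + (α ^ 2)⁻¹ * (x ^ 2 * (u x) ^ 2)) (Ioi (0:ℝ)) :=
        (hi1.const_mul _).add (hi2.const_mul _)
      have hiB : IntegrableOn (fun x => (3:ℝ) * (u x) ^ 2) (Ioi (0:ℝ)) := hi3.const_mul _
      have hiC : IntegrableOn (fun x => α ^ 2 * (deriv u x) ^ 2) (Ioi (0:ℝ)) :=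
        hi1.const_mul _
      have hiD : IntegrableOn (fun x => (α ^ 2)⁻¹ * (x ^ 2 * (u x) ^ 2)) (Ioi (0:ℝ)) :=
        hi2.const_mul _
      rw [integral_sub hiA hiB, integral_add hiC hiD,
        integral_const_mul, integral_const_mul, integral_const_mul]
    have hR : (∫ x in Ioi (0:ℝ), (α ^ 2 * ((deriv g x) ^ 2 * x ^ 2
          * Real.exp (-x ^ 2 / α ^ 2)) + Φ x))
        = α ^ 2 * ∫ x in Ioi (0 : ℝ),
            (deriv g x) ^ 2 * x ^ 2 * Real.exp (-x ^ 2 / α ^ 2) := by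
      have hiE : IntegrableOn (fun x => α ^ 2 * ((deriv g x) ^ 2 * x ^ 2
          * Real.exp (-x ^ 2 / α ^ 2))) (Ioi (0:ℝ)) := hiR.const_mul _
      rw [integral_add hiE hiΦ, integral_const_mul, hΦ0, add_zero]
    rw [hL, setIntegral_congr_fun measurableSet_Ioi key, hR]
  refine ⟨hmain, ?_⟩
  have hIR : (0:ℝ) ≤ ∫ x in Ioi (0 : ℝ),
      (deriv g x) ^ 2 * x ^ 2 * Real.exp (-x ^ 2 / α ^ 2) := by
    refine setIntegral_nonneg measurableSet_Ioi fun x _ => ?_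
    positivity
  nlinarith [hmain, mul_nonneg (sq_nonneg α) hIR, sq_abs α]
end

section
/- Let n ≥ 1 and 1 ≤ k ≤ n. For every u ∈ C_c^∞(ℝⁿ_{k,+}): ∫ |∇u|² dx + ∫ |x|²|u|² dx − (n+2k) ∫ |u|² dx ≥ 0, with all integrals over ℝⁿ_{k,+}. -/
open MeasureTheory Set
open MeasureTheory Set Real

noncomputable def mfun (c t : ℝ) : ℝ := c + Real.smoothTransition ((t - c)/c) * (t - c)

lemma mfun_pos {c : ℝ} (hc : 0 < c) (t : ℝ) : 0 < mfun c t := by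
  unfold mfun
  rcases le_or_gt t c with h | h
  · rw [Real.smoothTransition.zero_of_nonpos (by
      apply div_nonpos_of_nonpos_of_nonneg <;> linarith)]
    simpa using hc
  · have := Real.smoothTransition.nonneg ((t - c)/c)
    nlinarith

lemma mfun_eq {c t : ℝ} (hc : 0 < c) (h : 2*c ≤ t) : mfun c t = t := by
  unfold mfun
  rw [Real.smoothTransition.one_of_one_le (by rw [le_div_iff₀ hc]; linarith)]
  ring

lemma mfun_contDiff {c : ℝ} : ContDiff ℝ ((⊤:ℕ∞):WithTop ℕ∞) (mfun c) := by
  unfold mfun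
  have h : ContDiff ℝ ((⊤:ℕ∞):WithTop ℕ∞) fun t : ℝ => Real.smoothTransition ((t - c)/c) :=
    Real.smoothTransition.contDiff.comp ((contDiff_id.sub contDiff_const).div_const c)
  exact contDiff_const.add (h.mul (contDiff_id.sub contDiff_const))

lemma card_filter (n k : ℕ) (hk : k ≤ n) :
    (Finset.univ.filter fun i : Fin n => n - k ≤ (i : ℕ)).card = k := by
  have : (Finset.univ.filter fun i : Fin n => n - k ≤ (i : ℕ)) =
      (Finset.Ico (n-k) n).attachFin (fun m hm => (Finset.mem_Ico.mp hm).2) := by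
    ext i
    simp [Finset.mem_attachFin, Finset.mem_Ico, i.isLt]
  rw [this, Finset.card_attachFin, Nat.card_Ico]
  omega


lemma orthant_open (n k : ℕ) :
    IsOpen {x : EuclideanSpace ℝ (Fin n) | ∀ i : Fin n, n - k ≤ (i : ℕ) → 0 < x i} := by
  have : {x : EuclideanSpace ℝ (Fin n) | ∀ i : Fin n, n - k ≤ (i : ℕ) → 0 < x i}
      = ⋂ i : Fin n, {x : EuclideanSpace ℝ (Fin n) | n - k ≤ (i : ℕ) → 0 < x i} := by
    ext x; simp
  rw [this]
  refine isOpen_iInter_of_finite fun i => ?_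
  by_cases h : n - k ≤ (i : ℕ)
  · have : {x : EuclideanSpace ℝ (Fin n) | n - k ≤ (i : ℕ) → 0 < x i}
        = (EuclideanSpace.proj (𝕜 := ℝ) i) ⁻¹' (Ioi 0) := by
      ext x; simp [h]
    rw [this]
    exact (isOpen_Ioi).preimage (EuclideanSpace.proj i).continuous
  · have : {x : EuclideanSpace ℝ (Fin n) | n - k ≤ (i : ℕ) → 0 < x i} = univ := by
      ext x; simp [h]
    rw [this]; exact isOpen_univ

lemma eps_exists (n k : ℕ) (u : EuclideanSpace ℝ (Fin n) → ℝ)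
    (hsupp : HasCompactSupport u)
    (hO : tsupport u ⊆ {x : EuclideanSpace ℝ (Fin n) | ∀ i : Fin n, n - k ≤ (i : ℕ) → 0 < x i}) :
    ∃ δ : ℝ, 0 < δ ∧ ∀ x ∈ tsupport u, ∀ i : Fin n, n - k ≤ (i : ℕ) → δ ≤ x i := by
  obtain ⟨δ, hδ, hsub⟩ := hsupp.exists_thickening_subset_open (orthant_open n k) hO
  refine ⟨δ, hδ, fun x hx i hi => ?_⟩
  by_contra hlt
  push_neg at hlt
  have hxi : 0 < x i := hO hx i hi
  set y : EuclideanSpace ℝ (Fin n) := x - x i • EuclideanSpace.single i 1 with hy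
  have hyth : y ∈ Metric.thickening δ (tsupport u) := by
    rw [Metric.mem_thickening_iff]
    refine ⟨x, hx, ?_⟩
    have : dist y x = ‖x i • EuclideanSpace.single i (1:ℝ)‖ := by
      rw [dist_eq_norm, hy]
      simp
    rw [this, norm_smul, EuclideanSpace.norm_single]
    simp only [norm_one, mul_one, Real.norm_eq_abs, abs_of_pos hxi]
    exact hlt
  have := hsub hyth i hi
  rw [hy] at this
  simp [EuclideanSpace.single_apply] at this
lemma sum_sq_apply_le (n : ℕ) (L : EuclideanSpace ℝ (Fin n) →L[ℝ] ℝ) :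
    ∑ i, (L (EuclideanSpace.single i 1))^2 ≤ ‖L‖^2 := by
  set g : Fin n → ℝ := fun i => L (EuclideanSpace.single i 1) with hg
  set y : EuclideanSpace ℝ (Fin n) := ∑ i, g i • EuclideanSpace.single i 1 with hy
  have hyi : ∀ j, y j = g j := by
    intro j
    have : y j = EuclideanSpace.proj (𝕜 := ℝ) j y := by simp
    rw [this, hy, map_sum]
    simp [EuclideanSpace.single_apply]
  have hLy : L y = ∑ i, g i ^ 2 := by
    rw [hy, map_sum]
    simp [sq]
    rfl
  have hny : ‖y‖^2 = ∑ i, g i ^ 2 := by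
    rw [EuclideanSpace.norm_eq, Real.sq_sqrt (by positivity)]
    simp [hyi]
  have h1 : ∑ i, g i ^ 2 ≤ ‖L‖ * ‖y‖ := by
    rw [← hLy]
    exact (le_abs_self _).trans ((Real.norm_eq_abs _) ▸ L.le_opNorm y)
  nlinarith [norm_nonneg L, norm_nonneg y, sq_nonneg (‖L‖ - ‖y‖)]
variable {n : ℕ}

lemma ibp (φ : ℝ → ℝ) (hφ : ContDiff ℝ ((⊤:ℕ∞):WithTop ℕ∞) φ)
    (g : EuclideanSpace ℝ (Fin n) → ℝ) (hg : ContDiff ℝ ((⊤:ℕ∞):WithTop ℕ∞) g)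
    (hgs : HasCompactSupport g) (i : Fin n) :
    ∫ x, φ (x i) * fderiv ℝ g x (EuclideanSpace.single i 1)
      = - ∫ x, deriv φ (x i) * g x := by
  set v : EuclideanSpace ℝ (Fin n) := EuclideanSpace.single i 1 with hv
  set f : EuclideanSpace ℝ (Fin n) → ℝ := fun x => φ (x i) with hf
  have hproj : ∀ x : EuclideanSpace ℝ (Fin n), EuclideanSpace.proj (𝕜 := ℝ) i x = x i := by
    intro x; simp
  have hfder : ∀ x, HasFDerivAt f
      (deriv φ (x i) • (EuclideanSpace.proj i : EuclideanSpace ℝ (Fin n) →L[ℝ] ℝ)) x := by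
    intro x
    have h1 : HasDerivAt φ (deriv φ (x i)) (x i) :=
      (hφ.differentiable (by simp) (x i)).hasDerivAt
    have h2 : HasFDerivAt (fun y : EuclideanSpace ℝ (Fin n) => y i)
        (EuclideanSpace.proj i : EuclideanSpace ℝ (Fin n) →L[ℝ] ℝ) x := by
      simpa using (EuclideanSpace.proj (𝕜 := ℝ) (i := i)).hasFDerivAt (x := x)
    exact h1.comp_hasFDerivAt x h2
  have hfval : ∀ x, fderiv ℝ f x v = deriv φ (x i) := by
    intro x
    rw [(hfder x).fderiv]
    simp [hv]
  have hfdiff : Differentiable ℝ f := fun x => (hfder x).differentiableAt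
  have hgdiff : Differentiable ℝ g := hg.differentiable (by simp)
  have hfc : Continuous f := (hφ.continuous).comp (by
    have := (EuclideanSpace.proj (𝕜 := ℝ) (i := i)).continuous
    simpa using this)
  have hder_c : Continuous fun x : EuclideanSpace ℝ (Fin n) => deriv φ (x i) := by
    apply (hφ.continuous_deriv (by exact_mod_cast le_top)).comp
    have := (EuclideanSpace.proj (𝕜 := ℝ) (i := i)).continuous
    simpa using this
  have hgc := hg.continuous
  have hDg : Continuous fun x => fderiv ℝ g x v :=
    (hg.continuous_fderiv (by simp)).clm_apply continuous_const
  have hDgs : HasCompactSupport fun x => fderiv ℝ g x v :=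
    (hgs.fderiv ℝ).comp_left (g := fun L : EuclideanSpace ℝ (Fin n) →L[ℝ] ℝ => L v) rfl
  have hf'g : Integrable (fun x => fderiv ℝ f x v * g x) := by
    apply Continuous.integrable_of_hasCompactSupport
    · exact (by simp only [hfval]; exact hder_c : Continuous fun x => fderiv ℝ f x v).mul hgc
    · exact hgs.mul_left
  have hfg' : Integrable (fun x => f x * fderiv ℝ g x v) :=
    (hfc.mul hDg).integrable_of_hasCompactSupport hDgs.mul_left
  have hfg : Integrable (fun x => f x * g x) :=
    (hfc.mul hgc).integrable_of_hasCompactSupport hgs.mul_left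
  have := integral_mul_fderiv_eq_neg_fderiv_mul_of_integrable hf'g hfg' hfg (fun x _ => hfdiff x) (fun x _ => hgdiff x)
  rw [this]
  congr 1
  apply integral_congr_ae
  filter_upwards with x
  rw [hfval]

/-- The scale non-invariant Heisenberg Uncertainty Principle on the orthant
`ℝⁿ_{k,+}`: `∫ |∇u|² + ∫ |x|²|u|² − (n+2k) ∫ |u|² ≥ 0` for `u ∈ C_c^∞(ℝⁿ_{k,+})`. -/
theorem hup_orthant_nonneg (n k : ℕ) (hn : 1 ≤ n) (hk1 : 1 ≤ k) (hkn : k ≤ n)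
    (u : EuclideanSpace ℝ (Fin n) → ℝ) (hu : ContDiff ℝ (⊤ : ℕ∞) u)
    (hsupp : HasCompactSupport u)
    (hO : tsupport u ⊆ {x : EuclideanSpace ℝ (Fin n) | ∀ i : Fin n, n - k ≤ (i : ℕ) → 0 < x i}) :
    (∫ x in {x : EuclideanSpace ℝ (Fin n) | ∀ i : Fin n, n - k ≤ (i : ℕ) → 0 < x i},
        ‖fderiv ℝ u x‖ ^ 2)
      + (∫ x in {x : EuclideanSpace ℝ (Fin n) | ∀ i : Fin n, n - k ≤ (i : ℕ) → 0 < x i},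
          ‖x‖ ^ 2 * (u x) ^ 2)
      - ((n : ℝ) + 2 * k) *
        (∫ x in {x : EuclideanSpace ℝ (Fin n) | ∀ i : Fin n, n - k ≤ (i : ℕ) → 0 < x i},
          (u x) ^ 2) ≥ 0 := by
  classical
  -- basic regularity
  have hu' : ContDiff ℝ ((⊤:ℕ∞):WithTop ℕ∞) u := hu.of_le (by simp)
  have hudiff : Differentiable ℝ u := hu'.differentiable (by simp)
  have hucont : Continuous u := hu'.continuous
  have hfdc : Continuous (fderiv ℝ u) := hu'.continuous_fderiv (by simp)
  -- the square of u
  set g : EuclideanSpace ℝ (Fin n) → ℝ := fun x => u x ^ 2 with hgdef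
  have hg' : ContDiff ℝ ((⊤:ℕ∞):WithTop ℕ∞) g := hu'.pow 2
  have hgs : HasCompactSupport g := hsupp.comp_left (g := fun t : ℝ => t ^ 2) (by simp)
  have hDg : ∀ x v, fderiv ℝ g x v = 2 * u x * fderiv ℝ u x v := by
    intro x v
    have h : fderiv ℝ g x = u x • fderiv ℝ u x + u x • fderiv ℝ u x := by
      rw [hgdef]
      have : (fun x => u x ^ 2) = fun x => u x * u x := by funext y; ring
      rw [this, fderiv_fun_mul (hudiff x) (hudiff x)]
    rw [h]
    simp
    ring
  -- choice of the scale
  obtain ⟨δ, hδ, hδsupp⟩ := eps_exists n k u hsupp hO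
  set c : ℝ := δ / 3 with hcdef
  have hc : 0 < c := by positivity
  have hsupp2c : ∀ x ∈ tsupport u, ∀ i : Fin n, n - k ≤ (i : ℕ) → 2 * c < x i := by
    intro x hx i hi
    have := hδsupp x hx i hi
    rw [hcdef]; linarith
  -- the logarithmic derivative functions
  set φ : Fin n → ℝ → ℝ :=
    fun i t => if n - k ≤ (i : ℕ) then (mfun c t)⁻¹ - t else -t with hφdef
  have hφcd : ∀ i, ContDiff ℝ ((⊤:ℕ∞):WithTop ℕ∞) (φ i) := by
    intro i
    rw [hφdef]
    by_cases h : n - k ≤ (i : ℕ)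
    · simp only [h, if_true]
      exact (mfun_contDiff.inv fun t => (mfun_pos hc t).ne').sub contDiff_id
    · simp only [h, if_false]
      exact contDiff_id.neg
  -- values of φ and its derivative on the support
  have hφval : ∀ x ∈ tsupport u, ∀ i : Fin n, n - k ≤ (i : ℕ) →
      φ i (x i) = (x i)⁻¹ - x i := by
    intro x hx i hi
    rw [hφdef]
    simp only [hi, if_true]
    rw [mfun_eq hc (by linarith [hsupp2c x hx i hi])]
  have hφderiv : ∀ x ∈ tsupport u, ∀ i : Fin n, n - k ≤ (i : ℕ) →
      deriv (φ i) (x i) = -((x i) ^ 2)⁻¹ - 1 := by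
    intro x hx i hi
    have hxi : 2 * c < x i := hsupp2c x hx i hi
    have hee : φ i =ᶠ[nhds (x i)] fun t => t⁻¹ - t := by
      filter_upwards [Ioi_mem_nhds hxi] with t ht
      rw [hφdef]
      simp only [hi, if_true]
      rw [mfun_eq hc (le_of_lt ht)]
    rw [hee.deriv_eq]
    have hne : x i ≠ 0 := by nlinarith
    exact ((hasDerivAt_inv hne).sub (hasDerivAt_id (x i))).deriv
  have hφderiv' : ∀ t : ℝ, ∀ i : Fin n, ¬ (n - k ≤ (i : ℕ)) → deriv (φ i) t = -1 := by
    intro t i hi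
    have : φ i = fun t : ℝ => -t := by rw [hφdef]; simp [hi]
    rw [this]
    simp
  -- continuity of coordinate projections
  have hpc : ∀ i : Fin n, Continuous fun x : EuclideanSpace ℝ (Fin n) => x i := by
    intro i
    have := (EuclideanSpace.proj (𝕜 := ℝ) (i := i)).continuous
    simpa using this
  have hφc : ∀ i : Fin n, Continuous fun x : EuclideanSpace ℝ (Fin n) => φ i (x i) :=
    fun i => ((hφcd i).continuous).comp (hpc i)
  -- the partial derivatives of u
  set D : Fin n → EuclideanSpace ℝ (Fin n) → ℝ :=
    fun i x => fderiv ℝ u x (EuclideanSpace.single i 1) with hDdef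
  have hDcont : ∀ i, Continuous (D i) := fun i => hfdc.clm_apply continuous_const
  have hDcs : ∀ i, HasCompactSupport (D i) := fun i =>
    (hsupp.fderiv ℝ).comp_left
      (g := fun L : EuclideanSpace ℝ (Fin n) →L[ℝ] ℝ => L (EuclideanSpace.single i 1)) rfl
  -- integrability facts
  have intD2 : ∀ i, Integrable fun x => (D i x) ^ 2 := fun i =>
    ((hDcont i).pow 2).integrable_of_hasCompactSupport
      ((hDcs i).comp_left (g := fun t : ℝ => t ^ 2) (by simp) : HasCompactSupport fun x => (D i x) ^ 2)
  have intSumD2 : Integrable fun x => ∑ i, (D i x) ^ 2 :=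
    integrable_finset_sum _ fun i _ => intD2 i
  have intφ2u2 : ∀ i, Integrable fun x => (φ i (x i)) ^ 2 * u x ^ 2 := fun i =>
    (((hφc i).pow 2).mul (hucont.pow 2)).integrable_of_hasCompactSupport hgs.mul_left
  have intSumφ2u2 : Integrable fun x => ∑ i, (φ i (x i)) ^ 2 * u x ^ 2 :=
    integrable_finset_sum _ fun i _ => intφ2u2 i
  have hgsDv : ∀ i, HasCompactSupport fun x => fderiv ℝ g x (EuclideanSpace.single i 1) :=
    fun i => (hgs.fderiv ℝ).comp_left
      (g := fun L : EuclideanSpace ℝ (Fin n) →L[ℝ] ℝ => L (EuclideanSpace.single i 1)) rfl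
  have intφDg : ∀ i, Integrable fun x =>
      φ i (x i) * fderiv ℝ g x (EuclideanSpace.single i 1) := fun i =>
    ((hφc i).mul ((hg'.continuous_fderiv (by simp)).clm_apply
      continuous_const)).integrable_of_hasCompactSupport (hgsDv i).mul_left
  have intSumφDg : Integrable fun x =>
      ∑ i, φ i (x i) * fderiv ℝ g x (EuclideanSpace.single i 1) :=
    integrable_finset_sum _ fun i _ => intφDg i
  have intdφu2 : ∀ i, Integrable fun x => deriv (φ i) (x i) * u x ^ 2 := fun i =>
    ((((hφcd i).continuous_deriv (by exact_mod_cast le_top)).comp (hpc i)).mul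
      (hucont.pow 2)).integrable_of_hasCompactSupport hgs.mul_left
  have intSumdφu2 : Integrable fun x => ∑ i, deriv (φ i) (x i) * u x ^ 2 :=
    integrable_finset_sum _ fun i _ => intdφu2 i
  have intu2 : Integrable fun x => u x ^ 2 :=
    (hucont.pow 2).integrable_of_hasCompactSupport hgs
  have intnorm2 : Integrable fun x => ‖fderiv ℝ u x‖ ^ 2 :=
    (hfdc.norm.pow 2).integrable_of_hasCompactSupport
      ((hsupp.fderiv ℝ).comp_left
        (g := fun L : EuclideanSpace ℝ (Fin n) →L[ℝ] ℝ => ‖L‖ ^ 2) (by simp) :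
        HasCompactSupport fun x => ‖fderiv ℝ u x‖ ^ 2)
  have intx2u2 : Integrable fun x : EuclideanSpace ℝ (Fin n) => ‖x‖ ^ 2 * u x ^ 2 :=
    ((continuous_norm.pow 2).mul (hucont.pow 2)).integrable_of_hasCompactSupport hgs.mul_left
  -- positivity of the square integral
  have h0 : (0:ℝ) ≤ ∫ x, ∑ i, (D i x - φ i (x i) * u x) ^ 2 :=
    integral_nonneg fun x => Finset.sum_nonneg fun i _ => sq_nonneg _
  -- expansion of the square
  have hexpand : ∀ x, (∑ i, (D i x - φ i (x i) * u x) ^ 2)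
      = ((∑ i, (D i x) ^ 2) + ∑ i, (φ i (x i)) ^ 2 * u x ^ 2)
        - ∑ i, φ i (x i) * fderiv ℝ g x (EuclideanSpace.single i 1) := by
    intro x
    rw [← Finset.sum_add_distrib, ← Finset.sum_sub_distrib]
    refine Finset.sum_congr rfl fun i _ => ?_
    rw [hDg]
    ring
  have hsplit : ∫ x, ∑ i, (D i x - φ i (x i) * u x) ^ 2
      = ((∫ x, ∑ i, (D i x) ^ 2) + ∫ x, ∑ i, (φ i (x i)) ^ 2 * u x ^ 2)
        - ∫ x, ∑ i, φ i (x i) * fderiv ℝ g x (EuclideanSpace.single i 1) := by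
    have hAB : Integrable (fun x => (∑ i, (D i x) ^ 2) + ∑ i, (φ i (x i)) ^ 2 * u x ^ 2) :=
      intSumD2.add intSumφ2u2
    rw [integral_congr_ae (Filter.Eventually.of_forall hexpand),
      integral_sub hAB intSumφDg, integral_add intSumD2 intSumφ2u2]
  -- integration by parts
  have hibp : ∫ x, ∑ i, φ i (x i) * fderiv ℝ g x (EuclideanSpace.single i 1)
      = - ∫ x, ∑ i, deriv (φ i) (x i) * u x ^ 2 := by
    rw [integral_finset_sum _ fun i _ => intφDg i,
      integral_finset_sum _ fun i _ => intdφu2 i, ← Finset.sum_neg_distrib]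
    refine Finset.sum_congr rfl fun i _ => ?_
    exact ibp (φ i) (hφcd i) g hg' hgs i
  -- pointwise identity for the potential terms
  have hpt : ∀ x : EuclideanSpace ℝ (Fin n),
      (∑ i, (φ i (x i)) ^ 2 * u x ^ 2) + (∑ i, deriv (φ i) (x i) * u x ^ 2)
        = (‖x‖ ^ 2 - ((n:ℝ) + 2 * k)) * u x ^ 2 := by
    intro x
    by_cases hx : x ∈ tsupport u
    · have hnorm : ‖x‖ ^ 2 = ∑ i, (x i) ^ 2 := by
        rw [EuclideanSpace.norm_eq, Real.sq_sqrt (by positivity)]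
        simp [sq_abs]
      have hterm : ∀ i : Fin n, (φ i (x i)) ^ 2 + deriv (φ i) (x i)
          = (x i) ^ 2 - (if n - k ≤ (i:ℕ) then (3:ℝ) else 1) := by
        intro i
        by_cases hi : n - k ≤ (i:ℕ)
        · rw [hφval x hx i hi, hφderiv x hx i hi]
          have hne : x i ≠ 0 := (hO hx i hi).ne'
          simp only [hi, if_true]
          field_simp
          ring
        · rw [hφderiv' (x i) i hi]
          simp only [hφdef, hi, if_false]
          ring
      have hcount : ∑ i : Fin n, (if n - k ≤ (i:ℕ) then (3:ℝ) else 1) = (n:ℝ) + 2 * k := by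
        rw [Finset.sum_ite, Finset.sum_const, Finset.sum_const]
        have h1 : (Finset.univ.filter fun i : Fin n => n - k ≤ (i : ℕ)).card = k :=
          card_filter n k hkn
        have h2 : (Finset.univ.filter fun i : Fin n => ¬ (n - k ≤ (i : ℕ))).card = n - k := by
          have := Finset.card_filter_add_card_filter_not
            (s := (Finset.univ : Finset (Fin n))) (p := fun i : Fin n => n - k ≤ (i : ℕ))
          simp only [Finset.card_univ, Fintype.card_fin] at this
          omega
        rw [h1, h2]
        have : ((n - k : ℕ) : ℝ) = (n : ℝ) - k := by
          rw [Nat.cast_sub hkn]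
        simp [this]
        ring
      calc (∑ i, (φ i (x i)) ^ 2 * u x ^ 2) + (∑ i, deriv (φ i) (x i) * u x ^ 2)
          = (∑ i, ((φ i (x i)) ^ 2 + deriv (φ i) (x i))) * u x ^ 2 := by
            rw [← Finset.sum_add_distrib, Finset.sum_mul]
            exact Finset.sum_congr rfl fun i _ => by ring
        _ = ((∑ i, (x i) ^ 2) - ((n:ℝ) + 2 * k)) * u x ^ 2 := by
            rw [Finset.sum_congr rfl fun i _ => hterm i, Finset.sum_sub_distrib, hcount]
        _ = (‖x‖ ^ 2 - ((n:ℝ) + 2 * k)) * u x ^ 2 := by rw [hnorm]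
    · have hu0 : u x = 0 := image_eq_zero_of_notMem_tsupport hx
      simp [hu0]
  -- assembling the inequality on the whole space
  have hcomb : (∫ x, ∑ i, (φ i (x i)) ^ 2 * u x ^ 2)
      + (∫ x, ∑ i, deriv (φ i) (x i) * u x ^ 2)
      = (∫ x : EuclideanSpace ℝ (Fin n), ‖x‖ ^ 2 * u x ^ 2)
        - ((n:ℝ) + 2 * k) * ∫ x, u x ^ 2 := by
    rw [← integral_add intSumφ2u2 intSumdφu2]
    rw [integral_congr_ae (Filter.Eventually.of_forall hpt)]
    have : ∀ x : EuclideanSpace ℝ (Fin n), (‖x‖ ^ 2 - ((n:ℝ) + 2 * k)) * u x ^ 2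
        = ‖x‖ ^ 2 * u x ^ 2 - ((n:ℝ) + 2 * k) * u x ^ 2 := fun x => by ring
    rw [integral_congr_ae (Filter.Eventually.of_forall this),
      integral_sub intx2u2 (intu2.const_mul _), integral_const_mul]
  have hmono : (∫ x, ∑ i, (D i x) ^ 2) ≤ ∫ x, ‖fderiv ℝ u x‖ ^ 2 :=
    integral_mono intSumD2 intnorm2 fun x => sum_sq_apply_le n (fderiv ℝ u x)
  -- convert the set integrals to integrals over the whole space
  have hset1 : (∫ x in {x : EuclideanSpace ℝ (Fin n) | ∀ i : Fin n, n - k ≤ (i : ℕ) → 0 < x i},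
      ‖fderiv ℝ u x‖ ^ 2) = ∫ x, ‖fderiv ℝ u x‖ ^ 2 := by
    apply setIntegral_eq_integral_of_forall_compl_eq_zero
    intro x hx
    have hxn : x ∉ tsupport u := fun h => hx (hO h)
    have : fderiv ℝ u x = 0 := by
      by_contra h
      exact hxn (support_fderiv_subset ℝ (Function.mem_support.mpr h))
    simp [this]
  have hset2 : (∫ x in {x : EuclideanSpace ℝ (Fin n) | ∀ i : Fin n, n - k ≤ (i : ℕ) → 0 < x i},
      ‖x‖ ^ 2 * (u x) ^ 2) = ∫ x : EuclideanSpace ℝ (Fin n), ‖x‖ ^ 2 * u x ^ 2 := by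
    apply setIntegral_eq_integral_of_forall_compl_eq_zero
    intro x hx
    have hxn : x ∉ tsupport u := fun h => hx (hO h)
    rw [image_eq_zero_of_notMem_tsupport hxn]
    ring
  have hset3 : (∫ x in {x : EuclideanSpace ℝ (Fin n) | ∀ i : Fin n, n - k ≤ (i : ℕ) → 0 < x i},
      (u x) ^ 2) = ∫ x, u x ^ 2 := by
    apply setIntegral_eq_integral_of_forall_compl_eq_zero
    intro x hx
    have hxn : x ∉ tsupport u := fun h => hx (hO h)
    rw [image_eq_zero_of_notMem_tsupport hxn]
    ring
  rw [hset1, hset2, hset3]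
  rw [hsplit, hibp] at h0
  linarith
end

section
/- Let v be smooth, compactly supported on ℝⁿ_{k,+}, and set u(x) = (∏_{i=n-k+1}^n x_i) v(x). Then ∫_{ℝⁿ_{k,+}} |∇(u/∏ x_i)|² ∏_{i=n-k+1}^n x_i² dx = ∫_{ℝⁿ_{k,+}} |∇u|² dx; that is, the weighted Dirichlet energy of v with weight ∏ x_i² equals the unweighted Dirichlet energy of u. -/
open MeasureTheory Set

open scoped RealInnerProductSpace

section aux

variable {E : Type*} [NormedAddCommGroup E] [NormedSpace ℝ E]

lemma fderiv_eq_zero_of_nmem_tsupport {f : E → ℝ} {x : E} (hx : x ∉ tsupport f) :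
    fderiv ℝ f x = 0 := by
  have h1 : f =ᶠ[nhds x] 0 := by
    filter_upwards [(isClosed_tsupport f).isOpen_compl.mem_nhds hx] with y hy
    exact image_eq_zero_of_notMem_tsupport hy
  rw [h1.fderiv_eq]
  exact fderiv_const_apply 0

omit [NormedSpace ℝ E] in
lemma hcs_aux {f g : E → ℝ} (hg : HasCompactSupport g)
    (h : ∀ x, x ∉ tsupport g → f x = 0) : HasCompactSupport f := by
  have h1 : tsupport f ⊆ tsupport g := by
    apply closure_minimal ?_ (isClosed_tsupport g)
    intro x hx
    by_contra hx'
    exact hx (h x hx')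
  exact IsCompact.of_isClosed_subset hg (isClosed_tsupport f) h1

lemma integral_fderiv_apply_eq_zero {n : ℕ} {F : EuclideanSpace ℝ (Fin n) → ℝ}
    (hF : ContDiff ℝ (⊤ : ℕ∞) F) (hFs : HasCompactSupport F) (u : EuclideanSpace ℝ (Fin n)) :
    ∫ x, fderiv ℝ F x u = 0 := by
  obtain ⟨r, hr0, hsub⟩ := hFs.isBounded.subset_ball_lt 0 0
  set φ : ContDiffBump (0 : EuclideanSpace ℝ (Fin n)) := ⟨r, r + 1, hr0, by linarith⟩ with hφ
  have hφ1 : ∀ x ∈ Metric.ball (0 : EuclideanSpace ℝ (Fin n)) r, φ x = 1 := fun x hx =>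
    φ.one_of_mem_closedBall (Metric.ball_subset_closedBall hx)
  have hA : ∀ x, fderiv ℝ (fun y => φ y) x u * F x = 0 := by
    intro x
    by_cases hx : x ∈ tsupport F
    · have h1 : (fun y => φ y) =ᶠ[nhds x] (fun _ => 1) := by
        filter_upwards [Metric.isOpen_ball.mem_nhds (hsub hx)] with y hy
        exact hφ1 y hy
      rw [h1.fderiv_eq]
      simp
    · simp [image_eq_zero_of_notMem_tsupport hx]
  have hB : ∀ x, φ x * fderiv ℝ F x u = fderiv ℝ F x u := by
    intro x
    by_cases hx : x ∈ tsupport F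
    · rw [hφ1 x (hsub hx), one_mul]
    · rw [fderiv_eq_zero_of_nmem_tsupport hx]
      simp
  have hFder : Continuous fun x => fderiv ℝ F x u :=
    (hF.continuous_fderiv (by simp)).clm_apply continuous_const
  have hFderS : HasCompactSupport fun x => fderiv ℝ F x u := by
    apply hcs_aux hFs
    intro x hx
    rw [fderiv_eq_zero_of_nmem_tsupport hx]; simp
  have I1 : Integrable (fun x => fderiv ℝ (fun y => φ y) x u * F x) volume :=
    (integrable_zero _ _ _).congr (Filter.Eventually.of_forall fun x => (hA x).symm)
  have I2 : Integrable (fun x => φ x * fderiv ℝ F x u) volume := by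
    apply Continuous.integrable_of_hasCompactSupport (φ.continuous.mul hFder)
    exact hcs_aux hFderS fun x hx => by
      rw [Pi.mul_apply, image_eq_zero_of_notMem_tsupport hx, mul_zero]
  have I3 : Integrable (fun x => φ x * F x) volume := by
    apply Continuous.integrable_of_hasCompactSupport (φ.continuous.mul hF.continuous)
    exact hcs_aux hFs fun x hx => by rw [Pi.mul_apply, image_eq_zero_of_notMem_tsupport hx, mul_zero]
  have key := integral_mul_fderiv_eq_neg_fderiv_mul_of_integrable (μ := volume)
    I1 I2 I3 (fun x _ => (φ.contDiff (n := (⊤ : ℕ∞))).differentiable (by simp) x)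
    (fun x _ => hF.differentiable (by simp) x)
  simp only [hB, hA, integral_zero, neg_zero] at key
  exact key

end aux

/-- Weighted Dirichlet energy identity on the orthant: for
`v ∈ C_c^∞(ℝⁿ_{k,+})` and `u = (∏_{i=n-k+1}^n x_i) v`, the weighted Dirichlet energy
of `v = u / ∏ x_i` with weight `∏ x_i²` equals the unweighted Dirichlet energy of `u`. -/
theorem weighted_dirichlet_identity (n k : ℕ) (hn : 1 ≤ n) (hk1 : 1 ≤ k) (hkn : k ≤ n)
    (v : EuclideanSpace ℝ (Fin n) → ℝ) (hv : ContDiff ℝ (⊤ : ℕ∞) v)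
    (hsupp : HasCompactSupport v)
    (hO : tsupport v ⊆ {x : EuclideanSpace ℝ (Fin n) | ∀ i : Fin n, n - k ≤ (i : ℕ) → 0 < x i}) :
    let O : Set (EuclideanSpace ℝ (Fin n)) :=
      {x | ∀ i : Fin n, n - k ≤ (i : ℕ) → 0 < x i}
    let w : EuclideanSpace ℝ (Fin n) → ℝ := fun x =>
      ∏ i ∈ Finset.univ.filter (fun i : Fin n => n - k ≤ (i : ℕ)), x i
    (∫ x in O, ‖fderiv ℝ v x‖ ^ 2 * (w x) ^ 2)
      = ∫ x in O, ‖fderiv ℝ (fun y => w y * v y) x‖ ^ 2 := by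
  intro O w
  classical
  set S : Finset (Fin n) := Finset.univ.filter (fun i : Fin n => n - k ≤ (i : ℕ)) with hS
  set p : Fin n → EuclideanSpace ℝ (Fin n) → ℝ :=
    fun i x => ∏ j ∈ S.erase i, x j with hpdef
  set e : Fin n → EuclideanSpace ℝ (Fin n) := fun i => EuclideanSpace.single i (1:ℝ) with hedef
  set F : Fin n → EuclideanSpace ℝ (Fin n) → ℝ :=
    fun i x => (v x * v x) * (x i * (p i x * p i x)) with hFdef
  -- smoothness facts
  have hprojC : ∀ i : Fin n, ContDiff ℝ (⊤ : ℕ∞) (fun x : EuclideanSpace ℝ (Fin n) => x i) :=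
    fun i => (EuclideanSpace.proj (𝕜 := ℝ) i).contDiff
  have hpC : ∀ i, ContDiff ℝ (⊤ : ℕ∞) (p i) := fun i => contDiff_prod fun j _ => hprojC j
  have hwC : ContDiff ℝ (⊤ : ℕ∞) w := contDiff_prod fun i _ => hprojC i
  have hFC : ∀ i, ContDiff ℝ (⊤ : ℕ∞) (F i) :=
    fun i => (hv.mul hv).mul ((hprojC i).mul ((hpC i).mul (hpC i)))
  have hvD : ∀ x, HasFDerivAt v (fderiv ℝ v x) x :=
    fun x => (hv.differentiable (by simp) x).hasFDerivAt
  set W' : EuclideanSpace ℝ (Fin n) → EuclideanSpace ℝ (Fin n) →L[ℝ] ℝ :=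
    fun x => ∑ i ∈ S, p i x •
      (EuclideanSpace.proj i : EuclideanSpace ℝ (Fin n) →L[ℝ] ℝ) with hW'
  have hwD : ∀ x, HasFDerivAt w (W' x) x :=
    fun x => HasFDerivAt.finset_prod fun i _ => (EuclideanSpace.proj (𝕜 := ℝ) i).hasFDerivAt
  have hv0 : ∀ x, x ∉ tsupport v → v x = 0 := fun x hx => image_eq_zero_of_notMem_tsupport hx
  have hdv0 : ∀ x, x ∉ tsupport v → fderiv ℝ v x = 0 :=
    fun x hx => fderiv_eq_zero_of_nmem_tsupport hx
  have hproje : ∀ i j : Fin n, (EuclideanSpace.proj j : EuclideanSpace ℝ (Fin n) →L[ℝ] ℝ) (e i)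
      = if i = j then 1 else 0 := by
    intro i j; simp [hedef, EuclideanSpace.single_apply, eq_comm]
  -- Step 2: directional derivative of F i in direction e i
  have hstep2 : ∀ i, ∀ x : EuclideanSpace ℝ (Fin n),
      fderiv ℝ (F i) x (e i)
        = v x * v x * (p i x * p i x)
          + 2 * (v x * (x i * (p i x * p i x))) * fderiv ℝ v x (e i) := by
    intro i x
    set P : EuclideanSpace ℝ (Fin n) →L[ℝ] ℝ :=
      ∑ j ∈ S.erase i, (∏ l ∈ (S.erase i).erase j, x l) •
        (EuclideanSpace.proj j : EuclideanSpace ℝ (Fin n) →L[ℝ] ℝ) with hP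
    have hpD : HasFDerivAt (p i) P x :=
      HasFDerivAt.finset_prod fun j _ => (EuclideanSpace.proj (𝕜 := ℝ) j).hasFDerivAt
    have hxiD : HasFDerivAt (fun y : EuclideanSpace ℝ (Fin n) => y i)
        (EuclideanSpace.proj i : EuclideanSpace ℝ (Fin n) →L[ℝ] ℝ) x :=
      (EuclideanSpace.proj (𝕜 := ℝ) i).hasFDerivAt
    have hqD : HasFDerivAt (fun y : EuclideanSpace ℝ (Fin n) => y i * (p i y * p i y))
        (x i • (p i x • P + p i x • P) + (p i x * p i x) •
          (EuclideanSpace.proj i : EuclideanSpace ℝ (Fin n) →L[ℝ] ℝ)) x :=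
      hxiD.mul (hpD.mul hpD)
    have hFD : HasFDerivAt (F i)
        ((v x * v x) • (x i • (p i x • P + p i x • P) + (p i x * p i x) •
            (EuclideanSpace.proj i : EuclideanSpace ℝ (Fin n) →L[ℝ] ℝ))
          + (x i * (p i x * p i x)) • (v x • fderiv ℝ v x + v x • fderiv ℝ v x)) x :=
      ((hvD x).mul (hvD x)).mul hqD
    rw [hFD.fderiv]
    have hP0 : P (e i) = 0 := by
      rw [hP, ContinuousLinearMap.sum_apply]
      refine Finset.sum_eq_zero fun j hj => ?_
      rw [ContinuousLinearMap.smul_apply, hproje i j,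
        if_neg (fun h => (Finset.mem_erase.mp hj).1 h.symm), smul_zero]
    have hPi : (EuclideanSpace.proj i : EuclideanSpace ℝ (Fin n) →L[ℝ] ℝ) (e i) = 1 := by
      rw [hproje i i, if_pos rfl]
    simp only [ContinuousLinearMap.add_apply, ContinuousLinearMap.smul_apply, hP0, hPi,
      smul_eq_mul]
    ring
  -- compact support of the F i and the key vanishing integrals
  have hFcs : ∀ i, HasCompactSupport (F i) := by
    intro i
    apply hcs_aux hsupp
    intro x hx
    simp [hFdef, hv0 x hx]
  have hkey : ∀ i, ∫ x, fderiv ℝ (F i) x (e i) = 0 :=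
    fun i => integral_fderiv_apply_eq_zero (hFC i) (hFcs i) (e i)
  -- pointwise expansion of the squared norm
  have hpt : ∀ x, ‖fderiv ℝ (fun y => w y * v y) x‖ ^ 2
      = ‖fderiv ℝ v x‖ ^ 2 * w x ^ 2 + ∑ i ∈ S, fderiv ℝ (F i) x (e i) := by
    intro x
    have hmul : HasFDerivAt (fun y => w y * v y) (w x • fderiv ℝ v x + v x • W' x) x :=
      (hwD x).mul (hvD x)
    rw [hmul.fderiv]
    set T := (InnerProductSpace.toDual ℝ (EuclideanSpace ℝ (Fin n))).symm with hT
    set Gv := T (fderiv ℝ v x) with hGv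
    set Gw : EuclideanSpace ℝ (Fin n) := ∑ i ∈ S, p i x • e i with hGw
    have hTapp : ∀ (L : EuclideanSpace ℝ (Fin n) →L[ℝ] ℝ) (y : EuclideanSpace ℝ (Fin n)),
        ⟪T L, y⟫ = L y := fun L y => by
      rw [hT, ← InnerProductSpace.toDual_apply_apply, LinearIsometryEquiv.apply_symm_apply]
    have hGwd : (InnerProductSpace.toDual ℝ (EuclideanSpace ℝ (Fin n))) Gw = W' x := by
      apply ContinuousLinearMap.ext
      intro y
      rw [InnerProductSpace.toDual_apply_apply]
      nth_rewrite 1 [hGw]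
      rw [sum_inner, hW', ContinuousLinearMap.sum_apply]
      refine Finset.sum_congr rfl fun i _ => ?_
      rw [real_inner_smul_left, ContinuousLinearMap.smul_apply, smul_eq_mul]
      congr 1
      simpa [hedef] using EuclideanSpace.inner_single_left (𝕜 := ℝ) i 1 y
    have hTW : T (W' x) = Gw := by rw [← hGwd, hT, LinearIsometryEquiv.symm_apply_apply]
    have hTsum : T (w x • fderiv ℝ v x + v x • W' x) = w x • Gv + v x • Gw := by
      rw [map_add, LinearIsometryEquiv.map_smulₛₗ, LinearIsometryEquiv.map_smulₛₗ, hTW, ← hGv]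
      simp [starRingEnd_apply]
    have hnorm1 : ‖w x • fderiv ℝ v x + v x • W' x‖ = ‖w x • Gv + v x • Gw‖ := by
      rw [← hTsum]
      exact (LinearIsometryEquiv.norm_map _ _).symm
    have hGvn : ‖Gv‖ = ‖fderiv ℝ v x‖ := LinearIsometryEquiv.norm_map _ _
    have hinner : ⟪Gv, Gw⟫ = ∑ i ∈ S, p i x * fderiv ℝ v x (e i) := by
      rw [hGw, inner_sum]
      refine Finset.sum_congr rfl fun i _ => ?_
      rw [real_inner_smul_right]
      congr 1
      exact hTapp _ _
    have hGwi : ∀ i, ⟪e i, Gw⟫ = if i ∈ S then p i x else 0 := by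
      intro i
      rw [hGw, inner_sum]
      have : ∀ j ∈ S, ⟪e i, p j x • e j⟫ = if i = j then p j x else 0 := by
        intro j _
        rw [real_inner_smul_right]
        have h1 : ⟪e i, e j⟫ = if i = j then 1 else 0 := by
          simpa [hedef, EuclideanSpace.single_apply] using
            EuclideanSpace.inner_single_left (𝕜 := ℝ) i 1 (e j)
        rw [h1]
        by_cases h : i = j <;> simp [h]
      rw [Finset.sum_congr rfl this, Finset.sum_ite_eq S i (fun j => p j x)]
    have hGwn : ‖Gw‖ ^ 2 = ∑ i ∈ S, p i x * p i x := by
      rw [← real_inner_self_eq_norm_sq]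
      nth_rewrite 1 [hGw]
      rw [sum_inner]
      refine Finset.sum_congr rfl fun i hi => ?_
      rw [real_inner_smul_left, hGwi i, if_pos hi]
    have hsum : ∑ i ∈ S, fderiv ℝ (F i) x (e i)
        = (v x * v x) * (∑ i ∈ S, p i x * p i x)
          + 2 * (w x * v x) * ∑ i ∈ S, p i x * fderiv ℝ v x (e i) := by
      rw [Finset.mul_sum, Finset.mul_sum, ← Finset.sum_add_distrib]
      refine Finset.sum_congr rfl fun i hi => ?_
      rw [hstep2 i x]
      have hwi : x i * p i x = w x := Finset.mul_prod_erase S (fun j => x j) hi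
      rw [← hwi]
      ring
    rw [hnorm1, norm_add_sq_real, real_inner_smul_left, real_inner_smul_right, hinner,
      norm_smul, norm_smul, hGvn, hsum]
    simp only [Real.norm_eq_abs, mul_pow, sq_abs, hGwn]
    ring
  -- reduce the set integrals to integrals over the whole space
  have h1 : ∀ x, x ∉ O → ‖fderiv ℝ v x‖ ^ 2 * w x ^ 2 = 0 := by
    intro x hx
    rw [hdv0 x (fun hxx => hx (hO hxx))]
    simp
  have h2 : ∀ x, x ∉ O → ‖fderiv ℝ (fun y => w y * v y) x‖ ^ 2 = 0 := by
    intro x hx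
    have hxx : x ∉ tsupport v := fun hxx => hx (hO hxx)
    have hsub : tsupport (fun y => w y * v y) ⊆ tsupport v := by
      apply closure_minimal ?_ (isClosed_tsupport v)
      intro y hy
      by_contra hy'
      exact hy (by simp [image_eq_zero_of_notMem_tsupport hy'])
    rw [fderiv_eq_zero_of_nmem_tsupport (fun hmem => hxx (hsub hmem))]
    simp
  rw [setIntegral_eq_integral_of_forall_compl_eq_zero h1,
    setIntegral_eq_integral_of_forall_compl_eq_zero h2]
  -- integrability
  have hgics : ∀ i, HasCompactSupport fun x => fderiv ℝ (F i) x (e i) := fun i =>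
    hcs_aux (hFcs i) (fun x hx => by rw [fderiv_eq_zero_of_nmem_tsupport hx]; simp)
  have hIg : ∀ i, Integrable (fun x => fderiv ℝ (F i) x (e i)) volume := fun i =>
    Continuous.integrable_of_hasCompactSupport
      (((hFC i).continuous_fderiv (by simp)).clm_apply continuous_const) (hgics i)
  have hIA : Integrable (fun x => ‖fderiv ℝ v x‖ ^ 2 * w x ^ 2) volume := by
    apply Continuous.integrable_of_hasCompactSupport
    · exact ((hv.continuous_fderiv (by simp)).norm.pow 2).mul (hwC.continuous.pow 2)
    · apply hcs_aux hsupp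
      intro x hx
      rw [hdv0 x hx]; simp
  calc (∫ x, ‖fderiv ℝ v x‖ ^ 2 * w x ^ 2)
      = ∫ x, (‖fderiv ℝ v x‖ ^ 2 * w x ^ 2 + ∑ i ∈ S, fderiv ℝ (F i) x (e i)) := by
        rw [integral_add hIA (integrable_finset_sum S fun i _ => hIg i),
          integral_finset_sum S fun i _ => hIg i]
        simp [hkey]
    _ = ∫ x, ‖fderiv ℝ (fun y => w y * v y) x‖ ^ 2 :=
        integral_congr_ae (Filter.Eventually.of_forall fun x => (hpt x).symm)
end
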